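/- arXiv:2506.03671 — 12 statements merged into one kernel-verified Lean document; each statement's English description precedes it below -/
import Mathlib

section
/- Let Q and R be symmetric positive-definite linear maps on a finite-dimensional real inner product space and let c₁, c₂ > 0 satisfy c₁·Q ≼ R ≼ c₂·Q. Then (Q⁻¹ − R⁻¹) R (Q⁻¹ − R⁻¹) ≼ max{(1 − c₁)², (1 − c₂)²} · R⁻¹. -/
/-!
Put `x = R⁻¹ u` and `T = Q⁻¹ R`. The quadratic form of the left-hand side at `u` is
`B (T x - x) (T x - x)` for the form `B x y = ⟪x, R y⟫`, and the right-hand side is `m · B x x`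
with `m = max ((1 - c₁)², (1 - c₂)²)`. The map `T` is `B`-self-adjoint, and inverting
`c₁ Q ≼ R ≼ c₂ Q` (via Cauchy–Schwarz) gives `c₁ R⁻¹ ≼ Q⁻¹ ≼ c₂ R⁻¹`, i.e. `c₁ ≤ T ≤ c₂` with
respect to `B`. Hence `(T - c₁)(T - c₂) ≤ 0`, and
`(T - 1)² = (T - c₁)(T - c₂) + (c₁ + c₂ - 2) T + (1 - c₁ c₂)` is bounded by `(1 - c₁)²` or
`(1 - c₂)²` according to the sign of `c₁ + c₂ - 2`.
-/

open scoped RealInnerProductSpace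

noncomputable section

/-- Loewner order: `X ≼ Y` iff `Y - X` is positive semidefinite. -/
def LoewnerLE {E : Type*} [NormedAddCommGroup E] [InnerProductSpace ℝ E]
    (X Y : E →ₗ[ℝ] E) : Prop :=
  ∀ u : E, ⟪u, X u⟫ ≤ ⟪u, Y u⟫

namespace LinearMap.BilinForm

variable {𝕜 V : Type*} [Field 𝕜] [LinearOrder 𝕜] [IsStrictOrderedRing 𝕜]
  [AddCommGroup V] [Module 𝕜 V] {B : LinearMap.BilinForm 𝕜 V}

theorem IsPosSemidef.apply_sq_le (hB : B.IsPosSemidef) (x y : V) :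
    B x y ^ 2 ≤ B x x * B y y := by
  have hquad : ∀ t : 𝕜, 0 ≤ B y y * (t * t) + 2 * B x y * t + B x x := fun t => by
    have := hB.isNonneg.nonneg (x + t • y)
    simp only [map_add, map_smul, LinearMap.add_apply, LinearMap.smul_apply, smul_eq_mul,
      hB.isSymm.eq y x] at this
    linarith
  have := discrim_le_zero hquad
  rw [discrim] at this
  linarith

variable {T : V →ₗ[𝕜] V} {c₁ c₂ : 𝕜}

theorem apply_sub_smul_sub_smul_nonpos (hT : IsAdjointPair B B T T) (hc : c₁ ≤ c₂)
    (h₁ : ∀ z, c₁ * B z z ≤ B (T z) z) (h₂ : ∀ z, B (T z) z ≤ c₂ * B z z) (x : V) :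
    B (T x - c₁ • x) (T x - c₂ • x) ≤ 0 := by
  set a := T x - c₁ • x with ha
  set s := T x - c₂ • x with hs
  set w := T a - c₂ • a with hw
  have hwx : B w x = B a s := by
    simp only [hw, hs, map_sub, map_smul, LinearMap.sub_apply, LinearMap.smul_apply, smul_eq_mul,
      hT a x]
  rcases hc.lt_or_eq with hlt | rfl
  · -- `w = (T - c₂)(T - c₁) x = (T - c₁)(T - c₂) x` is tested against the upper bound at `a`
    -- and the lower bound at `s`, and `a - s = (c₂ - c₁) • x`.
    have hw' : w = T s - c₁ • s := by simp only [hw, ha, hs, map_sub, map_smul]; module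
    have hwa : B w a ≤ 0 := by
      simpa only [hw, map_sub, map_smul, LinearMap.sub_apply, LinearMap.smul_apply, smul_eq_mul,
        sub_nonpos] using h₂ a
    have hws : 0 ≤ B w s := by
      simpa only [hw', map_sub, map_smul, LinearMap.sub_apply, LinearMap.smul_apply, smul_eq_mul,
        sub_nonneg] using h₁ s
    have hsa : s = a - (c₂ - c₁) • x := by simp only [ha, hs]; module
    have hsplit : B w s = B w a - (c₂ - c₁) * B a s := by
      rw [← hwx, hsa, map_sub, map_smul, smul_eq_mul]
    exact nonpos_of_mul_nonpos_right (by linarith) (sub_pos.2 hlt)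
  · -- Here `B ((T - c₁) z) z = 0` for all `z`; polarize it at `x + a`.
    have hf : ∀ z, B (T z - c₁ • z) z = 0 := fun z => by
      simp only [map_sub, map_smul, LinearMap.sub_apply, LinearMap.smul_apply, smul_eq_mul]
      linarith [h₁ z, h₂ z]
    have hxa : T (x + a) - c₁ • (x + a) = a + w := by simp only [hw, ha, map_add]; module
    have hax : B a x = 0 := hf x
    have hwa : B w a = 0 := hf a
    have hwx' : B w x = B a a := hwx
    have hpol := hf (x + a)
    rw [hxa] at hpol
    simp only [map_add, LinearMap.add_apply, hwx', hax, hwa] at hpol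
    show B a a ≤ 0
    linarith

theorem apply_sub_self_le (hB : B.IsNonneg) (hT : IsAdjointPair B B T T)
    (h₁ : ∀ z, c₁ * B z z ≤ B (T z) z) (h₂ : ∀ z, B (T z) z ≤ c₂ * B z z) (x : V) :
    B (T x - x) (T x - x) ≤ max ((1 - c₁) ^ 2) ((1 - c₂) ^ 2) * B x x := by
  rcases le_or_gt c₁ c₂ with hc | hc
  · have hE := apply_sub_smul_sub_smul_nonpos hT hc h₁ h₂ x
    have hexpand : B (T x - x) (T x - x) = B (T x - c₁ • x) (T x - c₂ • x)
        + (c₁ + c₂ - 2) * B (T x) x + (1 - c₁ * c₂) * B x x := by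
      simp only [map_sub, map_smul, LinearMap.sub_apply, LinearMap.smul_apply, smul_eq_mul,
        ← hT x x]
      ring
    have hx := hB.nonneg x
    rcases le_total (c₁ + c₂) 2 with h | h
    · calc B (T x - x) (T x - x) ≤ (1 - c₁) ^ 2 * B x x := by nlinarith [h₁ x]
        _ ≤ _ := mul_le_mul_of_nonneg_right (le_max_left _ _) hx
    · calc B (T x - x) (T x - x) ≤ (1 - c₂) ^ 2 * B x x := by nlinarith [h₂ x]
        _ ≤ _ := mul_le_mul_of_nonneg_right (le_max_right _ _) hx
  · have hzero : ∀ z, B z z = 0 := fun z => by nlinarith [h₁ z, h₂ z, hB.nonneg z]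
    rw [hzero, hzero, mul_zero]

end LinearMap.BilinForm

section

variable {E : Type*} [NormedAddCommGroup E] [InnerProductSpace ℝ E]

theorem LinearMap.IsSymmetric.of_comp_eq_id {𝕜 F : Type*} [RCLike 𝕜] [NormedAddCommGroup F]
    [InnerProductSpace 𝕜 F] {P Pinv : F →ₗ[𝕜] F} (hP : P.IsSymmetric)
    (h : P ∘ₗ Pinv = LinearMap.id) : Pinv.IsSymmetric := fun u v => by
  have hP' (w : F) : P (Pinv w) = w := LinearMap.congr_fun h w
  calc inner 𝕜 (Pinv u) v = inner 𝕜 (Pinv u) (P (Pinv v)) := by rw [hP']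
    _ = inner 𝕜 (P (Pinv u)) (Pinv v) := (hP _ _).symm
    _ = inner 𝕜 u (Pinv v) := by rw [hP']

theorem LinearMap.isPositive_of_inner_pos {P : E →ₗ[ℝ] E} (hP : P.IsSymmetric)
    (hpos : ∀ u, u ≠ 0 → 0 < ⟪u, P u⟫) : P.IsPositive := by
  refine (P.isPositive_iff).2 ⟨hP, fun u => ?_⟩
  rcases eq_or_ne u 0 with rfl | hu
  · simp
  · exact (real_inner_comm u (P u) ▸ hpos u hu).le

def innerForm (P : E →ₗ[ℝ] E) : LinearMap.BilinForm ℝ E := (innerₗ E).compl₂ P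

@[simp] theorem innerForm_apply (P : E →ₗ[ℝ] E) (x y : E) : innerForm P x y = ⟪x, P y⟫ := rfl

theorem LinearMap.IsPositive.isPosSemidef_innerForm {P : E →ₗ[ℝ] E} (hP : P.IsPositive) :
    (innerForm P).IsPosSemidef where
  eq x y := by simp only [innerForm_apply, ← hP.isSymmetric x y, real_inner_comm]
  nonneg x := hP.inner_nonneg_right x

theorem LoewnerLE.smul {X Y : E →ₗ[ℝ] E} (h : LoewnerLE X Y) {c : ℝ} (hc : 0 ≤ c) :
    LoewnerLE (c • X) (c • Y) := fun u => by
  simpa only [LinearMap.smul_apply, real_inner_smul_right] using mul_le_mul_of_nonneg_left (h u) hc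

theorem LoewnerLE.inv_anti {P S Pinv Sinv : E →ₗ[ℝ] E} (hP : P.IsPositive) (hPS : LoewnerLE P S)
    (hPinv : P ∘ₗ Pinv = LinearMap.id) (hSinv : S ∘ₗ Sinv = LinearMap.id) :
    LoewnerLE Sinv Pinv := fun u => by
  have hs : S (Sinv u) = u := LinearMap.congr_fun hSinv u
  have hp : P (Pinv u) = u := LinearMap.congr_fun hPinv u
  -- With `s = S⁻¹ u`, `p = P⁻¹ u`: `⟪s, u⟫² ≤ ⟪s, P s⟫ ⟪p, u⟫ ≤ ⟪s, u⟫ ⟪p, u⟫`.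
  have hCS := hP.isPosSemidef_innerForm.apply_sq_le (Sinv u) (Pinv u)
  simp only [innerForm_apply, hp] at hCS
  have hPS' : ⟪Sinv u, P (Sinv u)⟫ ≤ ⟪Sinv u, u⟫ := by simpa only [hs] using hPS (Sinv u)
  have hs0 := hP.inner_nonneg_right (Sinv u)
  have hp0 : 0 ≤ ⟪Pinv u, u⟫ := by simpa only [hp] using hP.inner_nonneg_right (Pinv u)
  rw [real_inner_comm (Sinv u), real_inner_comm (Pinv u)]
  nlinarith

theorem loewnerLE_sub_conj_of_bounds {A R Rinv : E →ₗ[ℝ] E} (hA : A.IsSymmetric)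
    (hR : R.IsPositive) (hRinv : Rinv ∘ₗ R = LinearMap.id) (hRinv' : R ∘ₗ Rinv = LinearMap.id)
    {c₁ c₂ : ℝ}
    (h₁ : LoewnerLE (c₁ • Rinv) A) (h₂ : LoewnerLE A (c₂ • Rinv)) :
    LoewnerLE ((A - Rinv) ∘ₗ R ∘ₗ (A - Rinv))
      (max ((1 - c₁) ^ 2) ((1 - c₂) ^ 2) • Rinv) := by
  have hRinvR (z : E) : Rinv (R z) = z := LinearMap.congr_fun hRinv z
  have hT : LinearMap.IsAdjointPair (innerForm R) (innerForm R) (A ∘ₗ R) (A ∘ₗ R) :=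
    fun x y => (hA (R x) (R y)).trans (hR.isSymmetric x _)
  have hlow (z : E) : c₁ * innerForm R z z ≤ innerForm R ((A ∘ₗ R) z) z := by
    simpa [real_inner_smul_left, real_inner_smul_right, hRinvR, real_inner_comm] using h₁ (R z)
  have hup (z : E) : innerForm R ((A ∘ₗ R) z) z ≤ c₂ * innerForm R z z := by
    simpa [real_inner_smul_left, real_inner_smul_right, hRinvR, real_inner_comm] using h₂ (R z)
  intro u
  set x := Rinv u
  have hx : R x = u := LinearMap.congr_fun hRinv' u
  have hdiff : (A - Rinv) u = (A ∘ₗ R) x - x := by simp [x, hx]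
  calc ⟪u, ((A - Rinv) ∘ₗ R ∘ₗ (A - Rinv)) u⟫
      = innerForm R ((A ∘ₗ R) x - x) ((A ∘ₗ R) x - x) := by
        rw [LinearMap.comp_apply, LinearMap.comp_apply,
          ← (hA.sub (hR.isSymmetric.of_comp_eq_id hRinv')) u, hdiff, innerForm_apply]
    _ ≤ max ((1 - c₁) ^ 2) ((1 - c₂) ^ 2) * innerForm R x x :=
        LinearMap.BilinForm.apply_sub_self_le hR.isPosSemidef_innerForm.isNonneg hT hlow hup x
    _ = ⟪u, (max ((1 - c₁) ^ 2) ((1 - c₂) ^ 2) • Rinv) u⟫ := by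
        rw [innerForm_apply, hx, LinearMap.smul_apply, real_inner_smul_right, real_inner_comm]

end

theorem stmt0_general {V : Type*} [NormedAddCommGroup V] [InnerProductSpace ℝ V]
    (Q R Qinv Rinv : V →ₗ[ℝ] V)
    (hQsym : Q.IsSymmetric) (hQpos : ∀ u : V, u ≠ 0 → 0 < ⟪u, Q u⟫)
    (hRsym : R.IsSymmetric) (hRpos : ∀ u : V, u ≠ 0 → 0 < ⟪u, R u⟫)
    (hQinv' : Q ∘ₗ Qinv = LinearMap.id)
    (hRinv : Rinv ∘ₗ R = LinearMap.id) (hRinv' : R ∘ₗ Rinv = LinearMap.id)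
    (c₁ c₂ : ℝ) (hc₁ : 0 < c₁) (hc₂ : 0 < c₂)
    (h₁ : LoewnerLE (c₁ • Q) R) (h₂ : LoewnerLE R (c₂ • Q)) :
    LoewnerLE ((Qinv - Rinv) ∘ₗ R ∘ₗ (Qinv - Rinv))
      (max ((1 - c₁) ^ 2) ((1 - c₂) ^ 2) • Rinv) := by
  have hQ := LinearMap.isPositive_of_inner_pos hQsym hQpos
  have hR := LinearMap.isPositive_of_inner_pos hRsym hRpos
  refine loewnerLE_sub_conj_of_bounds (hQsym.of_comp_eq_id hQinv') hR hRinv hRinv' ?_ ?_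
  · have := (h₁.inv_anti (hQ.smul_of_nonneg hc₁.le) (Pinv := c₁⁻¹ • Qinv)
      (by rw [LinearMap.smul_comp, LinearMap.comp_smul, smul_inv_smul₀ hc₁.ne', hQinv'])
      hRinv').smul hc₁.le
    rwa [smul_inv_smul₀ hc₁.ne'] at this
  · have := (h₂.inv_anti hR hRinv' (Sinv := c₂⁻¹ • Qinv)
      (by rw [LinearMap.smul_comp, LinearMap.comp_smul, smul_inv_smul₀ hc₂.ne', hQinv'])).smul
      hc₂.le
    rwa [smul_inv_smul₀ hc₂.ne'] at this

theorem stmt0 {V : Type*} [NormedAddCommGroup V] [InnerProductSpace ℝ V]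
    [FiniteDimensional ℝ V]
    (Q R Qinv Rinv : V →ₗ[ℝ] V)
    (hQsym : Q.IsSymmetric) (hQpos : ∀ u : V, u ≠ 0 → 0 < ⟪u, Q u⟫)
    (hRsym : R.IsSymmetric) (hRpos : ∀ u : V, u ≠ 0 → 0 < ⟪u, R u⟫)
    (hQinv : Qinv ∘ₗ Q = LinearMap.id) (hQinv' : Q ∘ₗ Qinv = LinearMap.id)
    (hRinv : Rinv ∘ₗ R = LinearMap.id) (hRinv' : R ∘ₗ Rinv = LinearMap.id)
    (c₁ c₂ : ℝ) (hc₁ : 0 < c₁) (hc₂ : 0 < c₂)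
    (h₁ : LoewnerLE (c₁ • Q) R) (h₂ : LoewnerLE R (c₂ • Q)) :
    LoewnerLE ((Qinv - Rinv) ∘ₗ R ∘ₗ (Qinv - Rinv))
      (max ((1 - c₁) ^ 2) ((1 - c₂) ^ 2) • Rinv) :=
  stmt0_general Q R Qinv Rinv hQsym hQpos hRsym hRpos hQinv' hRinv hRinv' c₁ c₂ hc₁ hc₂ h₁ h₂
end
end

section
/- For every u ∈ V one has ‖P_M u‖_M ≤ ‖P̃ u‖_M and ⟨u, P̃ u⟩_M ≤ ‖u‖²_M. -/
open scoped RealInnerProductSpace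

noncomputable section

/-- The `A`-norm `‖u‖_A = ⟪u, A u⟫ ^ (1/2)`. -/
def anorm {E : Type*} [NormedAddCommGroup E] [InnerProductSpace ℝ E]
    (A : E →ₗ[ℝ] E) (u : E) : ℝ :=
  Real.sqrt ⟪u, A u⟫

/-!
`P_M` is the `M`-orthogonal projection onto `ker B`, along the range of `M⁻¹Bᵀ`. Since
`P̃ u - u` lies in that range, `P_M u = P_M (P̃ u)`, and an orthogonal projection does not
increase the `M`-norm. For the second claim, `⟪u, P̃ u⟫_M = ‖u‖²_M - ⟪B u, S̃⁻¹ B u⟫`, and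
`S̃⁻¹` is positive semidefinite together with `S̃`.
-/

section QuadraticForms

variable {E : Type*} [NormedAddCommGroup E] [InnerProductSpace ℝ E]

theorem inner_map_self_nonneg_of_pos {A : E →ₗ[ℝ] E} (hA : ∀ x, x ≠ 0 → 0 < ⟪x, A x⟫) (x : E) :
    0 ≤ ⟪x, A x⟫ := by
  rcases eq_or_ne x 0 with rfl | hx
  · simp
  · exact (hA x hx).le

theorem inner_rightInverse_self_nonneg {A A' : E →ₗ[ℝ] E} (hA : A.IsSymmetric)
    (hA_nonneg : ∀ x, 0 ≤ ⟪x, A x⟫) (hAA' : A ∘ₗ A' = LinearMap.id) (x : E) :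
    0 ≤ ⟪x, A' x⟫ := by
  have hx : A (A' x) = x := LinearMap.congr_fun hAA' x
  calc 0 ≤ ⟪A' x, A (A' x)⟫ := hA_nonneg _
    _ = ⟪A (A' x), A' x⟫ := (hA _ _).symm
    _ = ⟪x, A' x⟫ := by rw [hx]

theorem inner_map_self_le_of_inner_map_eq_zero {A : E →ₗ[ℝ] E} (hA : A.IsSymmetric)
    (hA_nonneg : ∀ x, 0 ≤ ⟪x, A x⟫) {p q : E} (hpq : ⟪p, A q⟫ = 0) :
    ⟪p, A p⟫ ≤ ⟪p + q, A (p + q)⟫ := by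
  have hqp : ⟪q, A p⟫ = 0 := by rw [← hA, real_inner_comm, hpq]
  have hsum : ⟪p + q, A (p + q)⟫ = ⟪p, A p⟫ + ⟪q, A q⟫ := by
    simp only [map_add, inner_add_left, inner_add_right, hpq, hqp]
    ring
  linarith [hA_nonneg q]

end QuadraticForms

section ConstraintProjection

variable {V W : Type*}
  [NormedAddCommGroup V] [InnerProductSpace ℝ V] [FiniteDimensional ℝ V]
  [NormedAddCommGroup W] [InnerProductSpace ℝ W] [FiniteDimensional ℝ W]

/-- For `T = S⁻¹` this is `P_M`, for `T = S̃⁻¹` it is `P̃`. -/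
def constraintProjection (Minv : V →ₗ[ℝ] V) (B : V →ₗ[ℝ] W) (T : W →ₗ[ℝ] W) : V →ₗ[ℝ] V :=
  LinearMap.id - Minv ∘ₗ LinearMap.adjoint B ∘ₗ T ∘ₗ B

variable {M Minv : V →ₗ[ℝ] V} {B : V →ₗ[ℝ] W} {T Sinv : W →ₗ[ℝ] W}

theorem constraintProjection_apply (u : V) :
    constraintProjection Minv B T u = u - Minv (LinearMap.adjoint B (T (B u))) :=
  rfl

theorem inner_map_constraintProjection (hMinv : M ∘ₗ Minv = LinearMap.id) (u : V) :
    ⟪u, M (constraintProjection Minv B T u)⟫ = ⟪u, M u⟫ - ⟪B u, T (B u)⟫ := by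
  rw [constraintProjection_apply, map_sub, inner_sub_right, ← LinearMap.comp_apply M, hMinv,
    LinearMap.id_apply, LinearMap.adjoint_inner_right]

theorem map_constraintProjection_eq_zero
    (hSinv : (B ∘ₗ Minv ∘ₗ LinearMap.adjoint B) ∘ₗ Sinv = LinearMap.id) (u : V) :
    B (constraintProjection Minv B Sinv u) = 0 := by
  have h := LinearMap.congr_fun hSinv (B u)
  simp only [LinearMap.comp_apply, LinearMap.id_apply] at h
  rw [constraintProjection_apply, map_sub, h, sub_self]

theorem constraintProjection_map_adjoint_eq_zero
    (hSinv : Sinv ∘ₗ (B ∘ₗ Minv ∘ₗ LinearMap.adjoint B) = LinearMap.id) (w : W) :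
    constraintProjection Minv B Sinv (Minv (LinearMap.adjoint B w)) = 0 := by
  have h := LinearMap.congr_fun hSinv w
  simp only [LinearMap.comp_apply, LinearMap.id_apply] at h
  rw [constraintProjection_apply, h, sub_self]

theorem constraintProjection_constraintProjection
    (hSinv : Sinv ∘ₗ (B ∘ₗ Minv ∘ₗ LinearMap.adjoint B) = LinearMap.id) (u : V) :
    constraintProjection Minv B Sinv (constraintProjection Minv B T u) =
      constraintProjection Minv B Sinv u := by
  rw [constraintProjection_apply (T := T), map_sub,
    constraintProjection_map_adjoint_eq_zero hSinv, sub_zero]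

theorem inner_map_constraintProjection_self_le (hM : M.IsSymmetric)
    (hM_nonneg : ∀ x, 0 ≤ ⟪x, M x⟫) (hMinv : M ∘ₗ Minv = LinearMap.id)
    (hSinv : (B ∘ₗ Minv ∘ₗ LinearMap.adjoint B) ∘ₗ Sinv = LinearMap.id) (u : V) :
    ⟪constraintProjection Minv B Sinv u, M (constraintProjection Minv B Sinv u)⟫ ≤ ⟪u, M u⟫ := by
  set q := Minv (LinearMap.adjoint B (Sinv (B u)))
  have hMq : M q = LinearMap.adjoint B (Sinv (B u)) := LinearMap.congr_fun hMinv _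
  have horth : ⟪constraintProjection Minv B Sinv u, M q⟫ = 0 := by
    rw [hMq, LinearMap.adjoint_inner_right, map_constraintProjection_eq_zero hSinv,
      inner_zero_left]
  have hu : u = constraintProjection Minv B Sinv u + q := by
    rw [constraintProjection_apply, sub_add_cancel]
  calc _ ≤ _ := inner_map_self_le_of_inner_map_eq_zero hM hM_nonneg horth
    _ = ⟪u, M u⟫ := by rw [← hu]

end ConstraintProjection

theorem stmt1_general {V W : Type*}
    [NormedAddCommGroup V] [InnerProductSpace ℝ V] [FiniteDimensional ℝ V]
    [NormedAddCommGroup W] [InnerProductSpace ℝ W] [FiniteDimensional ℝ W]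
    (M Minv : V →ₗ[ℝ] V) (hMsym : M.IsSymmetric)
    (hMpos : ∀ u : V, u ≠ 0 → 0 < ⟪u, M u⟫)
    (hMinv' : M ∘ₗ Minv = LinearMap.id)
    (B : V →ₗ[ℝ] W)
    (S Sinv : W →ₗ[ℝ] W) (hS : S = B ∘ₗ Minv ∘ₗ LinearMap.adjoint B)
    (hSinv : Sinv ∘ₗ S = LinearMap.id) (hSinv' : S ∘ₗ Sinv = LinearMap.id)
    (St Stinv : W →ₗ[ℝ] W) (hStsym : St.IsSymmetric)
    (hStpos : ∀ w : W, w ≠ 0 → 0 < ⟪w, St w⟫)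
    (hStinv' : St ∘ₗ Stinv = LinearMap.id)
    (PM Pt : V →ₗ[ℝ] V)
    (hPM : PM = LinearMap.id - Minv ∘ₗ LinearMap.adjoint B ∘ₗ Sinv ∘ₗ B)
    (hPt : Pt = LinearMap.id - Minv ∘ₗ LinearMap.adjoint B ∘ₗ Stinv ∘ₗ B)
    (u : V) :
    anorm M (PM u) ≤ anorm M (Pt u) ∧ ⟪u, M (Pt u)⟫ ≤ ⟪u, M u⟫ := by
  change PM = constraintProjection Minv B Sinv at hPM
  change Pt = constraintProjection Minv B Stinv at hPt
  subst hS hPM hPt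
  have hM_nonneg := inner_map_self_nonneg_of_pos hMpos
  constructor
  · rw [anorm, anorm, ← constraintProjection_constraintProjection hSinv u]
    exact Real.sqrt_le_sqrt
      (inner_map_constraintProjection_self_le hMsym hM_nonneg hMinv' hSinv' _)
  · rw [inner_map_constraintProjection hMinv']
    linarith [inner_rightInverse_self_nonneg hStsym (inner_map_self_nonneg_of_pos hStpos)
      hStinv' (B u)]

theorem stmt1 {V W : Type*}
    [NormedAddCommGroup V] [InnerProductSpace ℝ V] [FiniteDimensional ℝ V]
    [NormedAddCommGroup W] [InnerProductSpace ℝ W] [FiniteDimensional ℝ W]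
    (M Minv : V →ₗ[ℝ] V) (hMsym : M.IsSymmetric)
    (hMpos : ∀ u : V, u ≠ 0 → 0 < ⟪u, M u⟫)
    (hMinv : Minv ∘ₗ M = LinearMap.id) (hMinv' : M ∘ₗ Minv = LinearMap.id)
    (B : V →ₗ[ℝ] W) (hB : Function.Surjective B)
    (S Sinv : W →ₗ[ℝ] W) (hS : S = B ∘ₗ Minv ∘ₗ LinearMap.adjoint B)
    (hSinv : Sinv ∘ₗ S = LinearMap.id) (hSinv' : S ∘ₗ Sinv = LinearMap.id)
    (St Stinv : W →ₗ[ℝ] W) (hStsym : St.IsSymmetric)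
    (hStpos : ∀ w : W, w ≠ 0 → 0 < ⟪w, St w⟫)
    (hStinv : Stinv ∘ₗ St = LinearMap.id) (hStinv' : St ∘ₗ Stinv = LinearMap.id)
    (PM Pt : V →ₗ[ℝ] V)
    (hPM : PM = LinearMap.id - Minv ∘ₗ LinearMap.adjoint B ∘ₗ Sinv ∘ₗ B)
    (hPt : Pt = LinearMap.id - Minv ∘ₗ LinearMap.adjoint B ∘ₗ Stinv ∘ₗ B)
    (u : V) :
    anorm M (PM u) ≤ anorm M (Pt u) ∧ ⟪u, M (Pt u)⟫ ≤ ⟪u, M u⟫ :=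
  stmt1_general M Minv hMsym hMpos hMinv' B S Sinv hS hSinv hSinv' St Stinv hStsym hStpos hStinv' PM
    Pt hPM hPt u
end
end

section
/- If S ≼ S̃, then for every u ∈ V one has ‖P̃ u‖²_M ≤ ⟨u, P̃ u⟩_M. -/
open scoped RealInnerProductSpace

noncomputable section

theorem stmt2 {V W : Type*}
    [NormedAddCommGroup V] [InnerProductSpace ℝ V] [FiniteDimensional ℝ V]
    [NormedAddCommGroup W] [InnerProductSpace ℝ W] [FiniteDimensional ℝ W]
    (M Minv : V →ₗ[ℝ] V) (hMsym : M.IsSymmetric)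
    (hMpos : ∀ u : V, u ≠ 0 → 0 < ⟪u, M u⟫)
    (hMinv : Minv ∘ₗ M = LinearMap.id) (hMinv' : M ∘ₗ Minv = LinearMap.id)
    (B : V →ₗ[ℝ] W) (hB : Function.Surjective B)
    (S : W →ₗ[ℝ] W) (hS : S = B ∘ₗ Minv ∘ₗ LinearMap.adjoint B)
    (St Stinv : W →ₗ[ℝ] W) (hStsym : St.IsSymmetric)
    (hStpos : ∀ w : W, w ≠ 0 → 0 < ⟪w, St w⟫)
    (hStinv : Stinv ∘ₗ St = LinearMap.id) (hStinv' : St ∘ₗ Stinv = LinearMap.id)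
    (Pt : V →ₗ[ℝ] V)
    (hPt : Pt = LinearMap.id - Minv ∘ₗ LinearMap.adjoint B ∘ₗ Stinv ∘ₗ B)
    (hSSt : LoewnerLE S St)
    (u : V) :
    ⟪Pt u, M (Pt u)⟫ ≤ ⟪u, M (Pt u)⟫ := by
  have hMinvsym : Minv.IsSymmetric := by
    intro x y
    have h1 : M (Minv x) = x := congrFun (congrArg DFunLike.coe hMinv') x
    have h2 : M (Minv y) = y := congrFun (congrArg DFunLike.coe hMinv') y
    calc ⟪Minv x, y⟫ = ⟪Minv x, M (Minv y)⟫ := by rw [h2]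
      _ = ⟪M (Minv x), Minv y⟫ := (hMsym (Minv x) (Minv y)).symm
      _ = ⟪x, Minv y⟫ := by rw [h1]
  set w := Stinv (B u) with hw
  have hupt : u - Pt u = Minv (LinearMap.adjoint B w) := by
    rw [hPt]; simp [hw]
  have hBu : B u = St w := by
    have := congrFun (congrArg DFunLike.coe hStinv') (B u)
    simpa [hw] using this.symm
  have hBPt : B (Pt u) = St w - S w := by
    have h3 : Stinv (St w) = w := congrFun (congrArg DFunLike.coe hStinv) w
    rw [hPt, hS]; simp [hBu, h3]
  have hMinvM : Minv (M (Pt u)) = Pt u := congrFun (congrArg DFunLike.coe hMinv) (Pt u)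
  have key : ⟪u, M (Pt u)⟫ - ⟪Pt u, M (Pt u)⟫ = ⟪w, St w⟫ - ⟪w, S w⟫ := by
    calc ⟪u, M (Pt u)⟫ - ⟪Pt u, M (Pt u)⟫ = ⟪u - Pt u, M (Pt u)⟫ := by
          rw [inner_sub_left]
      _ = ⟪Minv (LinearMap.adjoint B w), M (Pt u)⟫ := by rw [hupt]
      _ = ⟪LinearMap.adjoint B w, Minv (M (Pt u))⟫ := hMinvsym _ _
      _ = ⟪LinearMap.adjoint B w, Pt u⟫ := by rw [hMinvM]
      _ = ⟪w, B (Pt u)⟫ := LinearMap.adjoint_inner_left B _ _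
      _ = ⟪w, St w - S w⟫ := by rw [hBPt]
      _ = ⟪w, St w⟫ - ⟪w, S w⟫ := inner_sub_right _ _ _
  have := hSSt w
  linarith
end
end

section
/- If (1 − ε)·S̃ ≼ S ≼ S̃ for some ε ∈ (0,1), then for every u ∈ V one has (1 − ε)·‖(I − P_M)u‖_M ≤ ‖(I − P̃)u‖_M ≤ ‖(I − P_M)u‖_M. -/
open scoped RealInnerProductSpace

noncomputable section

/-- Cauchy–Schwarz for a symmetric positive-semidefinite form. -/
lemma cs_psd {E : Type*} [NormedAddCommGroup E] [InnerProductSpace ℝ E]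
    (Q : E →ₗ[ℝ] E) (hsym : Q.IsSymmetric) (hpsd : ∀ x : E, 0 ≤ ⟪x, Q x⟫)
    (x y : E) : ⟪x, Q y⟫ ^ 2 ≤ ⟪x, Q x⟫ * ⟪y, Q y⟫ := by
  have hyx : ⟪y, Q x⟫ = ⟪x, Q y⟫ := by rw [← hsym y x, real_inner_comm]
  have key : ∀ t : ℝ, 0 ≤ ⟪y, Q y⟫ * (t * t) + (2 * ⟪x, Q y⟫) * t + ⟪x, Q x⟫ := by
    intro t
    have h := hpsd (x + t • y)
    simp only [map_add, map_smul, inner_add_left, inner_add_right,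
      real_inner_smul_left, real_inner_smul_right] at h
    rw [hyx] at h
    nlinarith [h]
  have hd := discrim_le_zero key
  rw [discrim] at hd
  nlinarith [hd]

set_option maxHeartbeats 1000000 in
theorem stmt3 {V W : Type*}
    [NormedAddCommGroup V] [InnerProductSpace ℝ V] [FiniteDimensional ℝ V]
    [NormedAddCommGroup W] [InnerProductSpace ℝ W] [FiniteDimensional ℝ W]
    (M Minv : V →ₗ[ℝ] V) (hMsym : M.IsSymmetric)
    (hMpos : ∀ u : V, u ≠ 0 → 0 < ⟪u, M u⟫)
    (hMinv : Minv ∘ₗ M = LinearMap.id) (hMinv' : M ∘ₗ Minv = LinearMap.id)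
    (B : V →ₗ[ℝ] W) (hB : Function.Surjective B)
    (S Sinv : W →ₗ[ℝ] W) (hS : S = B ∘ₗ Minv ∘ₗ LinearMap.adjoint B)
    (hSinv : Sinv ∘ₗ S = LinearMap.id) (hSinv' : S ∘ₗ Sinv = LinearMap.id)
    (St Stinv : W →ₗ[ℝ] W) (hStsym : St.IsSymmetric)
    (hStpos : ∀ w : W, w ≠ 0 → 0 < ⟪w, St w⟫)
    (hStinv : Stinv ∘ₗ St = LinearMap.id) (hStinv' : St ∘ₗ Stinv = LinearMap.id)
    (PM Pt : V →ₗ[ℝ] V)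
    (hPM : PM = LinearMap.id - Minv ∘ₗ LinearMap.adjoint B ∘ₗ Sinv ∘ₗ B)
    (hPt : Pt = LinearMap.id - Minv ∘ₗ LinearMap.adjoint B ∘ₗ Stinv ∘ₗ B)
    (ε : ℝ) (hε0 : 0 < ε) (hε1 : ε < 1)
    (h₁ : LoewnerLE ((1 - ε) • St) S) (h₂ : LoewnerLE S St)
    (u : V) :
    (1 - ε) * anorm M (u - PM u) ≤ anorm M (u - Pt u) ∧
      anorm M (u - Pt u) ≤ anorm M (u - PM u) := by
  -- basic positivity facts
  have hMpsd : ∀ v : V, 0 ≤ ⟪v, M v⟫ := by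
    intro v
    rcases eq_or_ne v 0 with rfl | hv
    · simp
    · exact (hMpos v hv).le
  have hStpsd : ∀ w : W, 0 ≤ ⟪w, St w⟫ := by
    intro w
    rcases eq_or_ne w 0 with rfl | hw
    · simp
    · exact (hStpos w hw).le
  -- Minv is symmetric
  have hMMinv : ∀ v : V, M (Minv v) = v := fun v => congrArg (· v) hMinv' |>.trans rfl
  have hSSinv : ∀ w : W, S (Sinv w) = w := fun w => congrArg (· w) hSinv' |>.trans rfl
  have hStStinv : ∀ w : W, St (Stinv w) = w := fun w => congrArg (· w) hStinv' |>.trans rfl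
  have hMinvsym : Minv.IsSymmetric := by
    intro x y
    calc ⟪Minv x, y⟫ = ⟪Minv x, M (Minv y)⟫ := by rw [hMMinv]
      _ = ⟪M (Minv x), Minv y⟫ := (hMsym (Minv x) (Minv y)).symm
      _ = ⟪x, Minv y⟫ := by rw [hMMinv]
  -- S is symmetric
  have hSsym : S.IsSymmetric := by
    intro x y
    simp only [hS, LinearMap.comp_apply]
    calc ⟪B (Minv (LinearMap.adjoint B x)), y⟫
        = ⟪Minv (LinearMap.adjoint B x), LinearMap.adjoint B y⟫ := by
          rw [← LinearMap.adjoint_inner_right]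
      _ = ⟪LinearMap.adjoint B x, Minv (LinearMap.adjoint B y)⟫ := hMinvsym _ _
      _ = ⟪x, B (Minv (LinearMap.adjoint B y))⟫ := LinearMap.adjoint_inner_left B _ _
  -- S is positive semidefinite
  have hSpsd : ∀ w : W, 0 ≤ ⟪w, S w⟫ := by
    intro w
    have : ⟪w, S w⟫ = ⟪Minv (LinearMap.adjoint B w), M (Minv (LinearMap.adjoint B w))⟫ := by
      simp only [hS, LinearMap.comp_apply]
      calc ⟪w, B (Minv (LinearMap.adjoint B w))⟫
          = ⟪LinearMap.adjoint B w, Minv (LinearMap.adjoint B w)⟫ :=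
            (LinearMap.adjoint_inner_left B _ w).symm
        _ = ⟪M (Minv (LinearMap.adjoint B w)), Minv (LinearMap.adjoint B w)⟫ := by
            rw [hMMinv]
        _ = ⟪Minv (LinearMap.adjoint B w), M (Minv (LinearMap.adjoint B w))⟫ :=
            real_inner_comm _ _
    rw [this]
    exact hMpsd _
  -- Sinv is symmetric
  have hSinvsym : Sinv.IsSymmetric := by
    intro x y
    calc ⟪Sinv x, y⟫ = ⟪Sinv x, S (Sinv y)⟫ := by rw [hSSinv]
      _ = ⟪S (Sinv x), Sinv y⟫ := (hSsym (Sinv x) (Sinv y)).symm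
      _ = ⟪x, Sinv y⟫ := by rw [hSSinv]
  set b : W := B u with hb
  set c : W := Sinv b with hc
  set a : W := Stinv b with ha
  have hScb : S c = b := hSSinv b
  have hStab : St a = b := hStStinv b
  set X : ℝ := ⟪c, S c⟫ with hX
  set Y : ℝ := ⟪a, S a⟫ with hY
  have hX0 : 0 ≤ X := hSpsd c
  have hY0 : 0 ≤ Y := hSpsd a
  -- the two M-norms squared
  have hnorm : ∀ w : W, ⟪Minv (LinearMap.adjoint B w), M (Minv (LinearMap.adjoint B w))⟫
      = ⟪w, S w⟫ := by
    intro w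
    simp only [hS, LinearMap.comp_apply]
    calc ⟪Minv (LinearMap.adjoint B w), M (Minv (LinearMap.adjoint B w))⟫
        = ⟪M (Minv (LinearMap.adjoint B w)), Minv (LinearMap.adjoint B w)⟫ :=
          real_inner_comm _ _
      _ = ⟪LinearMap.adjoint B w, Minv (LinearMap.adjoint B w)⟫ := by rw [hMMinv]
      _ = ⟪w, B (Minv (LinearMap.adjoint B w))⟫ := LinearMap.adjoint_inner_left B _ w
  have hPMu : u - PM u = Minv (LinearMap.adjoint B (Sinv (B u))) := by
    simp [hPM, LinearMap.comp_apply]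
  have hPtu : u - Pt u = Minv (LinearMap.adjoint B (Stinv (B u))) := by
    simp [hPt, LinearMap.comp_apply]
  have hanormPM : anorm M (u - PM u) = Real.sqrt X := by
    rw [anorm, hPMu, hnorm]
  have hanormPt : anorm M (u - Pt u) = Real.sqrt Y := by
    rw [anorm, hPtu, hnorm]
  -- upper bound : Y ≤ X
  have hYX : Y ≤ X := by
    have h1 : Y ≤ ⟪a, S c⟫ := by
      have := h₂ a
      rw [hStab] at this
      calc Y ≤ ⟪a, b⟫ := this
        _ = ⟪a, S c⟫ := by rw [hScb]
    have h2 : ⟪a, S c⟫ ^ 2 ≤ Y * X := cs_psd S hSsym hSpsd a c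
    nlinarith [h1, h2, hY0, hX0]
  -- lower bound : (1-ε)^2 * X ≤ Y
  have hε : 0 < 1 - ε := by linarith
  have hXY : (1 - ε) ^ 2 * X ≤ Y := by
    have hlow : ∀ w : W, (1 - ε) * ⟪w, St w⟫ ≤ ⟪w, S w⟫ := by
      intro w
      have := h₁ w
      simpa [real_inner_smul_right] using this
    have h1 : X = ⟪c, St a⟫ := by rw [hStab, ← hScb]
    have h2 : ⟪c, St a⟫ ^ 2 ≤ ⟪c, St c⟫ * ⟪a, St a⟫ := cs_psd St hStsym hStpsd c a
    have h3 : (1 - ε) * ⟪c, St c⟫ ≤ X := hlow c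
    have h4 : (1 - ε) * ⟪a, St a⟫ ≤ Y := hlow a
    have h6 : ((1 - ε) * ⟪c, St c⟫) * ((1 - ε) * ⟪a, St a⟫) ≤ X * Y :=
      mul_le_mul h3 h4 (mul_nonneg hε.le (hStpsd a)) hX0
    have h7 : X ^ 2 ≤ ⟪c, St c⟫ * ⟪a, St a⟫ := by rw [h1]; exact h2
    have h8 : (1 - ε) ^ 2 * X ^ 2 ≤ X * Y := by nlinarith [h6, h7, sq_nonneg (1 - ε)]
    rcases hX0.eq_or_lt with hX0' | hXpos
    · rw [← hX0']
      simpa using hY0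
    · have h9 : X * ((1 - ε) ^ 2 * X) ≤ X * Y := by
        calc X * ((1 - ε) ^ 2 * X) = (1 - ε) ^ 2 * X ^ 2 := by ring
          _ ≤ X * Y := h8
      exact le_of_mul_le_mul_left h9 hXpos
  constructor
  · rw [hanormPM, hanormPt]
    have : (1 - ε) * Real.sqrt X = Real.sqrt ((1 - ε) ^ 2 * X) := by
      rw [Real.sqrt_mul (by positivity), Real.sqrt_sq hε.le]
    rw [this]
    exact Real.sqrt_le_sqrt hXY
  · rw [hanormPM, hanormPt]
    exact Real.sqrt_le_sqrt hYX
end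
end

section
/- If (1 − ε)·S̃ ≼ S ≼ S̃ for some ε ∈ (0,1), then for every u ∈ V one has ‖(P̃ − P_M)ᵀ u‖_{M⁻¹} ≤ ε·‖u‖_{M⁻¹}, where (P̃ − P_M)ᵀ denotes the adjoint of P̃ − P_M with respect to the given inner product on V. -/
open scoped RealInnerProductSpace

noncomputable section

section Aux

variable {E : Type*} [NormedAddCommGroup E] [InnerProductSpace ℝ E]

lemma aux_inv_symm (A Ainv : E →ₗ[ℝ] E) (hAsym : A.IsSymmetric)
    (hAinv : ∀ z, A (Ainv z) = z) : Ainv.IsSymmetric := by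
  intro x y
  calc ⟪Ainv x, y⟫ = ⟪Ainv x, A (Ainv y)⟫ := by rw [hAinv]
    _ = ⟪A (Ainv x), Ainv y⟫ := (hAsym _ _).symm
    _ = ⟪x, Ainv y⟫ := by rw [hAinv]

lemma aux_key (A Ainv : E →ₗ[ℝ] E) (hAsym : A.IsSymmetric)
    (hApsd : ∀ x, 0 ≤ ⟪x, A x⟫) (hAinv : ∀ z, A (Ainv z) = z) (x t : E) :
    2 * ⟪x, t⟫ - ⟪t, A t⟫ ≤ ⟪x, Ainv x⟫ := by
  have h0 := hApsd (Ainv x - t)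
  have h1 : ⟪Ainv x, A t⟫ = ⟪x, t⟫ := by rw [← hAsym, hAinv]
  have h2 : ⟪Ainv x, x⟫ = ⟪x, Ainv x⟫ := real_inner_comm _ _
  have h3 : ⟪t, x⟫ = ⟪x, t⟫ := real_inner_comm _ _
  have e : ⟪Ainv x - t, A (Ainv x - t)⟫
      = ⟪x, Ainv x⟫ - 2 * ⟪x, t⟫ + ⟪t, A t⟫ := by
    rw [map_sub, inner_sub_left, inner_sub_right, inner_sub_right, hAinv, h1, h2, h3]
    ring
  linarith [e ▸ h0]

lemma aux_inv_mono (A Bm Ainv Binv : E →ₗ[ℝ] E) (hAsym : A.IsSymmetric)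
    (hApsd : ∀ x, 0 ≤ ⟪x, A x⟫) (hAinv : ∀ z, A (Ainv z) = z)
    (hBinv : ∀ z, Bm (Binv z) = z)
    (hle : ∀ x, ⟪x, A x⟫ ≤ ⟪x, Bm x⟫) (x : E) :
    ⟪x, Binv x⟫ ≤ ⟪x, Ainv x⟫ := by
  have hk := aux_key A Ainv hAsym hApsd hAinv x (Binv x)
  have h1 : ⟪Binv x, Bm (Binv x)⟫ = ⟪x, Binv x⟫ := by
    rw [hBinv]; exact real_inner_comm _ _
  have h2 := hle (Binv x)
  linarith

lemma aux_sq (X Sm Sminv : E →ₗ[ℝ] E) (hXsym : X.IsSymmetric)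
    (hXpsd : ∀ y, 0 ≤ ⟪y, X y⟫) (hSsym : Sm.IsSymmetric)
    (hSinv : ∀ z, Sminv (Sm z) = z)
    (ε : ℝ) (hε : 0 < ε)
    (hXle : ∀ t, ⟪t, X t⟫ ≤ ε * ⟪t, Sminv t⟫) (w : E) :
    ⟪X w, Sm (X w)⟫ ≤ ε * ⟪w, X w⟫ := by
  set t := Sm (X w) with ht
  have e1 : ⟪t, Sminv t⟫ = ⟪X w, Sm (X w)⟫ := by
    rw [ht, hSinv]; exact real_inner_comm _ _
  have h1 := hXle t
  rw [e1] at h1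
  have h0 := hXpsd (ε • w - t)
  have hc1 : ⟪ε • w, X t⟫ = ε * ⟪X w, t⟫ := by
    simp only [real_inner_smul_left, hXsym w t]
  have hc2 : ⟪t, X (ε • w)⟫ = ε * ⟪X w, t⟫ := by
    rw [map_smul, real_inner_smul_right, real_inner_comm]
  have hc3 : ⟪ε • w, X (ε • w)⟫ = ε ^ 2 * ⟪w, X w⟫ := by
    rw [map_smul, real_inner_smul_left, real_inner_smul_right]; ring
  have e2 : ⟪ε • w - t, X (ε • w - t)⟫
      = ε ^ 2 * ⟪w, X w⟫ - 2 * ε * ⟪X w, t⟫ + ⟪t, X t⟫ := by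
    rw [map_sub, inner_sub_left, inner_sub_right, inner_sub_right, hc1, hc2, hc3]
    ring
  have e3 : ⟪X w, t⟫ = ⟪X w, Sm (X w)⟫ := by rw [ht]
  rw [e2, e3] at h0
  nlinarith [h0, h1, hε]

end Aux

theorem stmt4 {V W : Type*}
    [NormedAddCommGroup V] [InnerProductSpace ℝ V] [FiniteDimensional ℝ V]
    [NormedAddCommGroup W] [InnerProductSpace ℝ W] [FiniteDimensional ℝ W]
    (M Minv : V →ₗ[ℝ] V) (hMsym : M.IsSymmetric)
    (hMpos : ∀ u : V, u ≠ 0 → 0 < ⟪u, M u⟫)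
    (hMinv : Minv ∘ₗ M = LinearMap.id) (hMinv' : M ∘ₗ Minv = LinearMap.id)
    (B : V →ₗ[ℝ] W) (hB : Function.Surjective B)
    (S Sinv : W →ₗ[ℝ] W) (hS : S = B ∘ₗ Minv ∘ₗ LinearMap.adjoint B)
    (hSinv : Sinv ∘ₗ S = LinearMap.id) (hSinv' : S ∘ₗ Sinv = LinearMap.id)
    (St Stinv : W →ₗ[ℝ] W) (hStsym : St.IsSymmetric)
    (hStpos : ∀ w : W, w ≠ 0 → 0 < ⟪w, St w⟫)
    (hStinv : Stinv ∘ₗ St = LinearMap.id) (hStinv' : St ∘ₗ Stinv = LinearMap.id)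
    (PM Pt : V →ₗ[ℝ] V)
    (hPM : PM = LinearMap.id - Minv ∘ₗ LinearMap.adjoint B ∘ₗ Sinv ∘ₗ B)
    (hPt : Pt = LinearMap.id - Minv ∘ₗ LinearMap.adjoint B ∘ₗ Stinv ∘ₗ B)
    (ε : ℝ) (hε0 : 0 < ε) (hε1 : ε < 1)
    (h₁ : LoewnerLE ((1 - ε) • St) S) (h₂ : LoewnerLE S St)
    (u : V) :
    anorm Minv (LinearMap.adjoint (Pt - PM) u) ≤ ε * anorm Minv u := by
  -- pointwise inverse identities
  have hMi : ∀ z, Minv (M z) = z := fun z => by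
    simpa using LinearMap.ext_iff.mp hMinv z
  have hMi' : ∀ z, M (Minv z) = z := fun z => by
    simpa using LinearMap.ext_iff.mp hMinv' z
  have hSi : ∀ z, Sinv (S z) = z := fun z => by
    simpa using LinearMap.ext_iff.mp hSinv z
  have hSi' : ∀ z, S (Sinv z) = z := fun z => by
    simpa using LinearMap.ext_iff.mp hSinv' z
  have hSti' : ∀ z, St (Stinv z) = z := fun z => by
    simpa using LinearMap.ext_iff.mp hStinv' z
  -- symmetry facts
  have hMinvsym : Minv.IsSymmetric := aux_inv_symm M Minv hMsym hMi'
  have hSapp : ∀ z, S z = B (Minv (LinearMap.adjoint B z)) := fun z => by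
    rw [hS]; rfl
  have hSsym : S.IsSymmetric := by
    intro x y
    rw [hSapp, hSapp]
    calc ⟪B (Minv (LinearMap.adjoint B x)), y⟫
        = ⟪Minv (LinearMap.adjoint B x), LinearMap.adjoint B y⟫ :=
          (LinearMap.adjoint_inner_right B _ _).symm
      _ = ⟪LinearMap.adjoint B x, Minv (LinearMap.adjoint B y)⟫ := hMinvsym _ _
      _ = ⟪x, B (Minv (LinearMap.adjoint B y))⟫ := LinearMap.adjoint_inner_left B _ _
  have hSinvsym : Sinv.IsSymmetric := aux_inv_symm S Sinv hSsym hSi'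
  have hStinvsym : Stinv.IsSymmetric := aux_inv_symm St Stinv hStsym hSti'
  -- positivity facts
  have hMpsd : ∀ x, 0 ≤ ⟪x, M x⟫ := by
    intro x
    rcases eq_or_ne x 0 with h | h
    · simp [h]
    · exact (hMpos x h).le
  have hStpsd : ∀ x, 0 ≤ ⟪x, St x⟫ := by
    intro x
    rcases eq_or_ne x 0 with h | h
    · simp [h]
    · exact (hStpos x h).le
  have hMinvpsd : ∀ x : V, 0 ≤ ⟪x, Minv x⟫ := by
    intro x
    have : ⟪x, Minv x⟫ = ⟪Minv x, M (Minv x)⟫ := by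
      nth_rewrite 1 [← hMi' x]
      exact hMsym _ _
    rw [this]; exact hMpsd _
  have hSpsd : ∀ x, 0 ≤ ⟪x, S x⟫ := by
    intro x
    rw [hSapp]
    rw [← LinearMap.adjoint_inner_left B]
    exact hMinvpsd _
  -- inverse monotonicity consequences
  have hStle : ∀ x, ⟪x, Stinv x⟫ ≤ ⟪x, Sinv x⟫ :=
    aux_inv_mono S St Sinv Stinv hSsym hSpsd hSi' hSti' h₂
  have hSinvle : ∀ x, (1 - ε) * ⟪x, Sinv x⟫ ≤ ⟪x, Stinv x⟫ := by
    have h1ε : (0:ℝ) < 1 - ε := by linarith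
    have hAsym : ((1 - ε) • St).IsSymmetric := by
      intro x y
      simp only [LinearMap.smul_apply, real_inner_smul_left, real_inner_smul_right]
      rw [hStsym]
    have hApsd : ∀ x, 0 ≤ ⟪x, ((1 - ε) • St) x⟫ := by
      intro x
      simp only [LinearMap.smul_apply, real_inner_smul_right]
      exact mul_nonneg h1ε.le (hStpsd x)
    have hAinv : ∀ z, ((1 - ε) • St) (((1 - ε)⁻¹ • Stinv) z) = z := by
      intro z
      simp only [LinearMap.smul_apply, map_smul, smul_smul, hSti']
      rw [inv_mul_cancel₀ h1ε.ne', one_smul]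
    have hres := aux_inv_mono ((1 - ε) • St) S ((1 - ε)⁻¹ • Stinv) Sinv
      hAsym hApsd hAinv hSi' h₁
    intro x
    have := hres x
    simp only [LinearMap.smul_apply, real_inner_smul_right] at this
    calc (1 - ε) * ⟪x, Sinv x⟫ ≤ (1 - ε) * ((1 - ε)⁻¹ * ⟪x, Stinv x⟫) := by
          exact mul_le_mul_of_nonneg_left this h1ε.le
      _ = ⟪x, Stinv x⟫ := by field_simp
  -- the difference operator
  set D : W →ₗ[ℝ] W := Sinv - Stinv with hD
  have hDapp : ∀ z, D z = Sinv z - Stinv z := fun z => rfl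
  have hDsym : D.IsSymmetric := hSinvsym.sub hStinvsym
  have hDpsd : ∀ x, 0 ≤ ⟪x, D x⟫ := by
    intro x
    rw [hDapp, inner_sub_right]
    linarith [hStle x]
  have hDle : ∀ t, ⟪t, D t⟫ ≤ ε * ⟪t, Sinv t⟫ := by
    intro t
    rw [hDapp, inner_sub_right]
    linarith [hSinvle t]
  have hkey := aux_sq D S Sinv hDsym hDpsd hSsym hSi ε hε0 hDle
  -- Schur minimization step
  have hstepB : ∀ v : V, ⟪B v, Sinv (B v)⟫ ≤ ⟪v, M v⟫ := by
    intro v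
    set v0 := Minv (LinearMap.adjoint B (Sinv (B v))) with hv0
    have hMv0 : M v0 = LinearMap.adjoint B (Sinv (B v)) := hMi' _
    have hBv0 : B v0 = B v := by
      have : B v0 = S (Sinv (B v)) := by rw [hv0, hSapp]
      rw [this, hSi']
    have c1 : ⟪v0, M v0⟫ = ⟪B v, Sinv (B v)⟫ := by
      rw [hMv0, LinearMap.adjoint_inner_right, hBv0]
    have c2 : ⟪v - v0, M v0⟫ = 0 := by
      rw [hMv0, LinearMap.adjoint_inner_right, map_sub, hBv0, sub_self, inner_zero_left]
    have c3 : 0 ≤ ⟪v - v0, M (v - v0)⟫ := hMpsd _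
    have h4 : ⟪v0, M v⟫ = ⟪v, M v0⟫ :=
      (hMsym v0 v).symm.trans (real_inner_comm _ _)
    have e : ⟪v - v0, M (v - v0)⟫
        = ⟪v, M v⟫ - 2 * ⟪v, M v0⟫ + ⟪v0, M v0⟫ := by
      rw [map_sub, inner_sub_left, inner_sub_right, inner_sub_right, h4]
      ring
    have e2 : ⟪v - v0, M v0⟫ = ⟪v, M v0⟫ - ⟪v0, M v0⟫ := inner_sub_left _ _ _
    rw [e] at c3
    rw [e2] at c2
    linarith [c1, c2, c3]
  -- identify the adjoint of Pt - PM
  have hE : Pt - PM = Minv ∘ₗ (LinearMap.adjoint B ∘ₗ (D ∘ₗ B)) := by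
    rw [hPt, hPM]
    ext y
    simp only [LinearMap.sub_apply, LinearMap.comp_apply, LinearMap.id_apply, hDapp,
      map_sub]
    abel
  have hC : (LinearMap.adjoint B) ∘ₗ (D ∘ₗ (B ∘ₗ Minv)) = LinearMap.adjoint (Pt - PM) := by
    rw [LinearMap.eq_adjoint_iff]
    intro x y
    simp only [LinearMap.comp_apply]
    calc ⟪LinearMap.adjoint B (D (B (Minv x))), y⟫
        = ⟪D (B (Minv x)), B y⟫ := LinearMap.adjoint_inner_left B _ _
      _ = ⟪B (Minv x), D (B y)⟫ := hDsym _ _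
      _ = ⟪Minv x, LinearMap.adjoint B (D (B y))⟫ :=
          (LinearMap.adjoint_inner_right B _ _).symm
      _ = ⟪x, Minv (LinearMap.adjoint B (D (B y)))⟫ := hMinvsym _ _
      _ = ⟪x, (Pt - PM) y⟫ := by rw [hE]; rfl
  have hadj : LinearMap.adjoint (Pt - PM) u
      = LinearMap.adjoint B (D (B (Minv u))) := by
    rw [← hC]; rfl
  -- assemble
  set v := Minv u with hv
  set w := B v with hw
  set z := D w with hz
  have hn : ⟪LinearMap.adjoint B z, Minv (LinearMap.adjoint B z)⟫ = ⟪z, S z⟫ := by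
    rw [LinearMap.adjoint_inner_left, ← hSapp]
  have h1 : ⟪z, S z⟫ ≤ ε * ⟪w, D w⟫ := hkey w
  have h2 : ⟪w, D w⟫ ≤ ε * ⟪w, Sinv w⟫ := hDle w
  have h3 : ⟪w, Sinv w⟫ ≤ ⟪v, M v⟫ := hstepB v
  have h4 : ⟪u, Minv u⟫ = ⟪v, M v⟫ := by
    rw [hv]
    nth_rewrite 1 [← hMi' u]
    exact hMsym _ _
  have hSinvw : 0 ≤ ⟪w, Sinv w⟫ := by
    have := hSpsd (Sinv w)
    calc (0:ℝ) ≤ ⟪Sinv w, S (Sinv w)⟫ := this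
      _ = ⟪Sinv w, w⟫ := by rw [hSi']
      _ = ⟪w, Sinv w⟫ := real_inner_comm _ _
  have hfin : ⟪LinearMap.adjoint B z, Minv (LinearMap.adjoint B z)⟫
      ≤ ε ^ 2 * ⟪u, Minv u⟫ := by
    rw [hn, h4]
    nlinarith [h1, h2, h3, hε0.le, hSinvw]
  unfold anorm
  rw [hadj]
  calc Real.sqrt ⟪LinearMap.adjoint B (D (B (Minv u))),
        Minv (LinearMap.adjoint B (D (B (Minv u))))⟫
      ≤ Real.sqrt (ε ^ 2 * ⟪u, Minv u⟫) := Real.sqrt_le_sqrt hfin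
    _ = ε * Real.sqrt ⟪u, Minv u⟫ := by
        rw [Real.sqrt_mul (sq_nonneg ε), Real.sqrt_sq hε0.le]
end
end

section
/- Let (M₁, S̃₁) and (M₂, S̃₂) be two pairs of symmetric positive-definite linear maps, with Sᵢ = B Mᵢ⁻¹ Bᵀ and P̃ᵢ = I − Mᵢ⁻¹BᵀS̃ᵢ⁻¹B for i = 1, 2. Assume M₂ ≼ c·M₁ for some c > 0 and (1 − εᵢ)·S̃ᵢ ≼ Sᵢ ≼ S̃ᵢ with εᵢ ∈ (0,1) for i = 1, 2. Then for every u ∈ V: (i) ‖(P̃₁ − P̃₂P̃₁)u‖_{M₂} ≤ √c·ε₁·‖u‖_{M₁}, and (ii) ‖(P̃₁ − P̃₂P̃₁)u‖_{M₂} ≤ √c·(ε₁/(1 − ε₁))·‖(I − P̃₁)u‖_{M₁}. -/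
open scoped RealInnerProductSpace

noncomputable section

section Helpers
variable {E : Type*} [NormedAddCommGroup E] [InnerProductSpace ℝ E]

/-- inverse of a symmetric map is symmetric -/
lemma inv_symm_of_symm {M Minv : E →ₗ[ℝ] E} (hM : M.IsSymmetric)
    (h' : ∀ x, M (Minv x) = x) : Minv.IsSymmetric := by
  intro x y
  calc ⟪Minv x, y⟫ = ⟪Minv x, M (Minv y)⟫ := by rw [h']
    _ = ⟪M (Minv x), Minv y⟫ := (hM _ _).symm
    _ = ⟪x, Minv y⟫ := by rw [h']

/-- Cauchy-Schwarz for a psd symmetric bilinear form -/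
lemma cs_psd_s5 {A : E →ₗ[ℝ] E} (hA : A.IsSymmetric) (hpsd : ∀ x, 0 ≤ ⟪x, A x⟫)
    (x y : E) : ⟪x, A y⟫ ≤ Real.sqrt ⟪x, A x⟫ * Real.sqrt ⟪y, A y⟫ := by
  set p := ⟪x, A x⟫ with hp
  set r := ⟪y, A y⟫ with hr
  set m := ⟪x, A y⟫ with hm
  have hyx : ⟪y, A x⟫ = m := (real_inner_comm _ _).trans (hA x y)
  have key : ∀ l : ℝ, 0 ≤ p - 2*l*m + l^2 * r := by
    intro l
    have h0 := hpsd (x - l • y)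
    have e : ⟪x - l•y, A (x - l•y)⟫ = p - 2*l*m + l^2*r := by
      simp only [map_sub, map_smul, inner_sub_left, inner_sub_right,
        real_inner_smul_left, real_inner_smul_right, hyx, ← hp, ← hr, ← hm]
      ring
    linarith [e ▸ h0]
  have hm2 : m^2 ≤ p * r := by
    by_cases hr0 : r = 0
    · have hmz : m = 0 := by
        by_contra hmne
        have hc : 2*((p+1)/(2*m))*m = p+1 := by field_simp
        have hk := key ((p+1)/(2*m))
        rw [hr0] at hk
        nlinarith [hk, hc]
      simp [hmz, mul_nonneg (hpsd x) (hpsd y), hr0]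
    · have hrpos : 0 < r := lt_of_le_of_ne (hpsd y) (Ne.symm hr0)
      have := key (m/r)
      have h2 : 0 ≤ p - m^2/r := by
        have : p - 2*(m/r)*m + (m/r)^2*r = p - m^2/r := by field_simp; ring
        linarith [this ▸ key (m/r)]
      have := mul_le_mul_of_nonneg_right (le_of_sub_nonneg h2) hrpos.le
      calc m^2 = m^2/r * r := by field_simp
        _ ≤ p * r := by nlinarith [h2, hrpos]
  calc m ≤ |m| := le_abs_self m
    _ = Real.sqrt (m^2) := (Real.sqrt_sq_eq_abs m).symm
    _ ≤ Real.sqrt (p*r) := Real.sqrt_le_sqrt hm2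
    _ = Real.sqrt p * Real.sqrt r := Real.sqrt_mul (hpsd x) _

/-- inverse reverses the Loewner order -/
lemma inv_le_inv_loewner (A Ainv Bm Binv : E →ₗ[ℝ] E) (hAsym : A.IsSymmetric)
    (hApsd : ∀ x, 0 ≤ ⟪x, A x⟫) (hA : ∀ x, A (Ainv x) = x) (hBc : ∀ x, Bm (Binv x) = x)
    (hAB : ∀ x, ⟪x, A x⟫ ≤ ⟪x, Bm x⟫) (u : E) : ⟪u, Binv u⟫ ≤ ⟪u, Ainv u⟫ := by
  set v := Binv u with hv
  set w := Ainv u with hw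
  have e1 : ⟪v, Bm v⟫ = ⟪u, v⟫ := by rw [hv, hBc]; exact real_inner_comm _ _
  have e2 : ⟪v, A w⟫ = ⟪u, v⟫ := by rw [hw, hA]; exact real_inner_comm _ _
  have e3 : ⟪w, A v⟫ = ⟪u, v⟫ := by rw [← hAsym w v, hw, hA]
  have e4 : ⟪w, A w⟫ = ⟪u, w⟫ := by rw [hw, hA]; exact real_inner_comm _ _
  have h0 : 0 ≤ ⟪v - w, A (v - w)⟫ := hApsd _
  have e5 : ⟪v - w, A (v - w)⟫ = ⟪v, A v⟫ - 2*⟪u,v⟫ + ⟪u,w⟫ := by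
    simp only [map_sub, inner_sub_left, inner_sub_right, e2, e3, e4]; ring
  have h1 : ⟪v, A v⟫ ≤ ⟪v, Bm v⟫ := hAB v
  linarith [e5 ▸ h0, e1 ▸ h1]

/-- key quantitative lemma: if 0 ≼ H ≼ ε G then ⟨Hr, G⁻¹ Hr⟩ ≤ ε² ⟨r, G r⟩ -/
lemma key_lemma (G Ginv H : E →ₗ[ℝ] E) (hGG : ∀ x, G (Ginv x) = x)
    (hGsym : G.IsSymmetric) (hHsym : H.IsSymmetric)
    (hGpsd : ∀ x, 0 ≤ ⟪x, G x⟫) (hHpsd : ∀ x, 0 ≤ ⟪x, H x⟫)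
    (ε : ℝ) (hε : 0 ≤ ε) (hHG : ∀ x, ⟪x, H x⟫ ≤ ε * ⟪x, G x⟫)
    (r : E) : ⟪H r, Ginv (H r)⟫ ≤ ε^2 * ⟪r, G r⟫ := by
  set s := Ginv (H r) with hs
  have hGs : G s = H r := hGG _
  set t := ⟪H r, s⟫ with ht
  set ρ := ⟪r, G r⟫ with hρ
  have hsHr : ⟪s, H r⟫ = t := real_inner_comm _ _
  have hrHs : ⟪r, H s⟫ = t := by rw [← hHsym r s, real_inner_comm]; exact hsHr
  have htGs : ⟪s, G s⟫ = t := by rw [hGs]; exact hsHr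
  have ht0 : 0 ≤ t := htGs ▸ hGpsd s
  have hρ0 : 0 ≤ ρ := hGpsd r
  set h := ⟪r, H r⟫ with hh
  have hh0 : 0 ≤ h := hHpsd r
  have hhε : h ≤ ε * ρ := hHG r
  have esGr : ⟪s, G r⟫ = h := by
    rw [← hGsym s r, hGs]; exact real_inner_comm _ _
  have erGs : ⟪r, G s⟫ = h := by rw [hGs]
  have main : ∀ l : ℝ, 0 < l → 4*t ≤ ε*((l^2)⁻¹*t + l^2*ρ) + 2*ε^2*ρ := by
    intro l hl
    have hl0 : l ≠ 0 := ne_of_gt hl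
    have h1 := hHpsd (l⁻¹ • s - l • r)
    have h2 := hHG (l⁻¹ • s + l • r)
    simp only [map_add, map_sub, map_smul, inner_add_left, inner_add_right,
      inner_sub_left, inner_sub_right, real_inner_smul_left, real_inner_smul_right,
      hsHr, hrHs, htGs, esGr, erGs, ← hρ] at h1 h2
    have e1 : l⁻¹*(l*t) = t := by field_simp
    have e2 : l*(l⁻¹*t) = t := by field_simp
    have e3 : l⁻¹*(l*h) = h := by field_simp
    have e4 : l*(l⁻¹*h) = h := by field_simp
    have e5 : l⁻¹*(l⁻¹*⟪s, H s⟫) = (l^2)⁻¹*⟪s, H s⟫ := by ring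
    have e6 : l⁻¹*(l⁻¹*t) = (l^2)⁻¹*t := by ring
    have e7 : ε*h ≤ ε^2*ρ := by nlinarith
    nlinarith [h1, h2, e1, e2, e3, e4, e5, e6, e7]
  clear_value s t ρ h
  rcases eq_or_lt_of_le ht0 with htz | htpos
  · rw [← htz]
    positivity
  · by_cases hρz : ρ = 0
    · exfalso
      have hl : (0:ℝ) < Real.sqrt (ε+1) := Real.sqrt_pos.mpr (by linarith)
      have hsq : (Real.sqrt (ε+1))^2 = ε+1 := Real.sq_sqrt (by linarith)
      have := main (Real.sqrt (ε+1)) hl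
      rw [hρz, hsq] at this
      have hp : (0:ℝ) < (ε+1)⁻¹ := by positivity
      have hlt : ε * (ε+1)⁻¹ < 1 := by
        have h9 := mul_lt_mul_of_pos_right (show ε < ε+1 by linarith) hp
        rwa [mul_inv_cancel₀ (show ε+1 ≠ 0 by linarith)] at h9
      have h10 : 4*t ≤ (ε*(ε+1)⁻¹)*t := by linarith [this]
      have h11 : (ε*(ε+1)⁻¹)*t < 1*t := mul_lt_mul_of_pos_right hlt htpos
      linarith
    · have hρpos : 0 < ρ := lt_of_le_of_ne hρ0 (Ne.symm hρz)
      obtain ⟨τ, hτpos, hτ2⟩ : ∃ τ:ℝ, 0 < τ ∧ τ^2 = t :=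
        ⟨Real.sqrt t, Real.sqrt_pos.mpr htpos, Real.sq_sqrt ht0⟩
      obtain ⟨σ, hσpos, hσ2⟩ : ∃ σ:ℝ, 0 < σ ∧ σ^2 = ρ :=
        ⟨Real.sqrt ρ, Real.sqrt_pos.mpr hρpos, Real.sq_sqrt hρ0⟩
      have hlpos : 0 < Real.sqrt (τ/σ) := Real.sqrt_pos.mpr (div_pos hτpos hσpos)
      have hl2 : (Real.sqrt (τ/σ))^2 = τ/σ := Real.sq_sqrt (div_pos hτpos hσpos).le
      have hmain := main _ hlpos
      rw [hl2] at hmain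
      have ea : (τ/σ)⁻¹ * t = σ*τ := by
        rw [← hτ2]; field_simp
      have eb : (τ/σ) * ρ = τ*σ := by
        rw [← hσ2]; field_simp
      rw [ea, eb, ← hτ2, ← hσ2] at hmain
      have hfac : (τ - ε*σ)*(2*τ + ε*σ) ≤ 0 := by linarith [hmain]
      have hτσ : τ ≤ ε*σ := by
        by_contra hcon
        push_neg at hcon
        have h1 : 0 < τ - ε*σ := by linarith
        have h2 : 0 < 2*τ + ε*σ := by
          have := mul_nonneg hε hσpos.le
          linarith
        exact absurd hfac (not_le.mpr (mul_pos h1 h2))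
      have hsq : τ*τ ≤ (ε*σ)*(ε*σ) :=
        mul_le_mul hτσ hτσ hτpos.le (le_trans hτpos.le hτσ)
      rw [← hτ2, ← hσ2]
      linarith [hsq]
end Helpers

theorem stmt5 {V W : Type*}
    [NormedAddCommGroup V] [InnerProductSpace ℝ V] [FiniteDimensional ℝ V]
    [NormedAddCommGroup W] [InnerProductSpace ℝ W] [FiniteDimensional ℝ W]
    (B : V →ₗ[ℝ] W) (hB : Function.Surjective B)
    (M₁ M₁inv M₂ M₂inv : V →ₗ[ℝ] V)
    (hM₁sym : M₁.IsSymmetric) (hM₁pos : ∀ u : V, u ≠ 0 → 0 < ⟪u, M₁ u⟫)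
    (hM₁inv : M₁inv ∘ₗ M₁ = LinearMap.id) (hM₁inv' : M₁ ∘ₗ M₁inv = LinearMap.id)
    (hM₂sym : M₂.IsSymmetric) (hM₂pos : ∀ u : V, u ≠ 0 → 0 < ⟪u, M₂ u⟫)
    (hM₂inv : M₂inv ∘ₗ M₂ = LinearMap.id) (hM₂inv' : M₂ ∘ₗ M₂inv = LinearMap.id)
    (St₁ St₁inv St₂ St₂inv : W →ₗ[ℝ] W)
    (hSt₁sym : St₁.IsSymmetric) (hSt₁pos : ∀ w : W, w ≠ 0 → 0 < ⟪w, St₁ w⟫)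
    (hSt₁inv : St₁inv ∘ₗ St₁ = LinearMap.id) (hSt₁inv' : St₁ ∘ₗ St₁inv = LinearMap.id)
    (hSt₂sym : St₂.IsSymmetric) (hSt₂pos : ∀ w : W, w ≠ 0 → 0 < ⟪w, St₂ w⟫)
    (hSt₂inv : St₂inv ∘ₗ St₂ = LinearMap.id) (hSt₂inv' : St₂ ∘ₗ St₂inv = LinearMap.id)
    (S₁ S₂ : W →ₗ[ℝ] W)
    (hS₁ : S₁ = B ∘ₗ M₁inv ∘ₗ LinearMap.adjoint B)
    (hS₂ : S₂ = B ∘ₗ M₂inv ∘ₗ LinearMap.adjoint B)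
    (Pt₁ Pt₂ : V →ₗ[ℝ] V)
    (hPt₁ : Pt₁ = LinearMap.id - M₁inv ∘ₗ LinearMap.adjoint B ∘ₗ St₁inv ∘ₗ B)
    (hPt₂ : Pt₂ = LinearMap.id - M₂inv ∘ₗ LinearMap.adjoint B ∘ₗ St₂inv ∘ₗ B)
    (c : ℝ) (hc : 0 < c) (hM₂₁ : LoewnerLE M₂ (c • M₁))
    (ε₁ ε₂ : ℝ) (hε₁0 : 0 < ε₁) (hε₁1 : ε₁ < 1) (hε₂0 : 0 < ε₂) (hε₂1 : ε₂ < 1)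
    (h₁ : LoewnerLE ((1 - ε₁) • St₁) S₁) (h₁' : LoewnerLE S₁ St₁)
    (h₂ : LoewnerLE ((1 - ε₂) • St₂) S₂) (h₂' : LoewnerLE S₂ St₂)
    (u : V) :
    anorm M₂ ((Pt₁ - Pt₂ ∘ₗ Pt₁) u) ≤ Real.sqrt c * ε₁ * anorm M₁ u ∧
      anorm M₂ ((Pt₁ - Pt₂ ∘ₗ Pt₁) u) ≤
        Real.sqrt c * (ε₁ / (1 - ε₁)) * anorm M₁ (u - Pt₁ u) := by
  have hε₁' : (0:ℝ) < 1 - ε₁ := by linarith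
  set Bt := LinearMap.adjoint B with hBtdef
  -- pointwise inverse identities
  have pM₁' : ∀ x, M₁ (M₁inv x) = x := fun x => by
    have := LinearMap.congr_fun hM₁inv' x; simpa using this
  have pM₂' : ∀ x, M₂ (M₂inv x) = x := fun x => by
    have := LinearMap.congr_fun hM₂inv' x; simpa using this
  have pSt₁' : ∀ x, St₁ (St₁inv x) = x := fun x => by
    have := LinearMap.congr_fun hSt₁inv' x; simpa using this
  have pSt₂' : ∀ x, St₂ (St₂inv x) = x := fun x => by
    have := LinearMap.congr_fun hSt₂inv' x; simpa using this
  -- symmetry of inverses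
  have hM₁invsym : M₁inv.IsSymmetric := inv_symm_of_symm hM₁sym pM₁'
  have hM₂invsym : M₂inv.IsSymmetric := inv_symm_of_symm hM₂sym pM₂'
  have hSt₁invsym : St₁inv.IsSymmetric := inv_symm_of_symm hSt₁sym pSt₁'
  -- psd versions
  have hM₁psd : ∀ x, 0 ≤ ⟪x, M₁ x⟫ := fun x => by
    rcases eq_or_ne x 0 with h | h
    · simp [h]
    · exact (hM₁pos x h).le
  have hM₂psd : ∀ x, 0 ≤ ⟪x, M₂ x⟫ := fun x => by
    rcases eq_or_ne x 0 with h | h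
    · simp [h]
    · exact (hM₂pos x h).le
  have hSt₁psd : ∀ x, 0 ≤ ⟪x, St₁ x⟫ := fun x => by
    rcases eq_or_ne x 0 with h | h
    · simp [h]
    · exact (hSt₁pos x h).le
  -- M₁inv positive definite
  have hM₁invpos : ∀ x : V, x ≠ 0 → 0 < ⟪x, M₁inv x⟫ := by
    intro x hx
    have hnz : M₁inv x ≠ 0 := fun h => hx (by rw [← pM₁' x, h, map_zero])
    have h0 := hM₁pos (M₁inv x) hnz
    rw [pM₁'] at h0
    rwa [real_inner_comm] at h0
  -- adjoint facts
  have adjR : ∀ (x : V) (y : W), ⟪x, Bt y⟫ = ⟪B x, y⟫ := fun x y =>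
    LinearMap.adjoint_inner_right B x y
  have adjL : ∀ (x : W) (y : V), ⟪Bt x, y⟫ = ⟪x, B y⟫ := fun x y =>
    LinearMap.adjoint_inner_left B y x
  have hBtinj : ∀ x : W, Bt x = 0 → x = 0 := by
    intro x hx
    obtain ⟨v, hv⟩ := hB x
    have : ⟪x, x⟫ = 0 := by
      calc ⟪x, x⟫ = ⟪B v, x⟫ := by rw [hv]
        _ = ⟪v, Bt x⟫ := (adjR v x).symm
        _ = 0 := by rw [hx, inner_zero_right]
    exact inner_self_eq_zero.mp this
  -- S₁ facts
  have hS₁app : ∀ x, S₁ x = B (M₁inv (Bt x)) := fun x => by rw [hS₁]; rfl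
  have hS₂app : ∀ x, S₂ x = B (M₂inv (Bt x)) := fun x => by rw [hS₂]; rfl
  have hS₁sym : S₁.IsSymmetric := by
    intro x y
    rw [hS₁app, hS₁app]
    calc ⟪B (M₁inv (Bt x)), y⟫ = ⟪M₁inv (Bt x), Bt y⟫ := (adjR _ y).symm
      _ = ⟪Bt x, M₁inv (Bt y)⟫ := hM₁invsym _ _
      _ = ⟪x, B (M₁inv (Bt y))⟫ := adjL _ _
  have hS₁pd : ∀ x : W, x ≠ 0 → 0 < ⟪x, S₁ x⟫ := by
    intro x hx
    have e : ⟪x, S₁ x⟫ = ⟪Bt x, M₁inv (Bt x)⟫ := by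
      rw [hS₁app]; exact (adjL x _).symm
    rw [e]
    exact hM₁invpos _ (fun h => hx (hBtinj x h))
  have hS₁psd : ∀ x, 0 ≤ ⟪x, S₁ x⟫ := fun x => by
    rcases eq_or_ne x 0 with h | h
    · simp [h]
    · exact (hS₁pd x h).le
  -- construct the inverse of S₁
  have hS₁inj : Function.Injective S₁ := by
    intro x y hxy
    by_contra hne
    have hx : x - y ≠ 0 := sub_ne_zero.mpr hne
    have hlt := hS₁pd _ hx
    rw [map_sub, hxy, sub_self, inner_zero_right] at hlt
    exact lt_irrefl 0 hlt
  have hbij : Function.Bijective S₁ := ⟨hS₁inj, LinearMap.injective_iff_surjective.mp hS₁inj⟩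
  obtain ⟨S₁i, pS₁, pS₁'⟩ : ∃ Si : W →ₗ[ℝ] W,
      (∀ x, Si (S₁ x) = x) ∧ (∀ x, S₁ (Si x) = x) :=
    ⟨(LinearEquiv.ofBijective S₁ hbij).symm.toLinearMap,
      fun x => (LinearEquiv.ofBijective S₁ hbij).symm_apply_apply x,
      fun x => (LinearEquiv.ofBijective S₁ hbij).apply_symm_apply x⟩
  have hS₁isym : S₁i.IsSymmetric := inv_symm_of_symm hS₁sym pS₁'
  have hS₁ipsd : ∀ x, 0 ≤ ⟪x, S₁i x⟫ := by
    intro x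
    have h0 := hS₁psd (S₁i x)
    rw [pS₁'] at h0
    rwa [real_inner_comm] at h0
  -- Loewner order between the inverses
  have ord1 : ∀ x, ⟪x, St₁inv x⟫ ≤ ⟪x, S₁i x⟫ :=
    inv_le_inv_loewner S₁ S₁i St₁ St₁inv hS₁sym hS₁psd pS₁' pSt₁' h₁'
  have ord2 : ∀ x, (1 - ε₁) * ⟪x, S₁i x⟫ ≤ ⟪x, St₁inv x⟫ := by
    have hAsym : ((1-ε₁) • St₁).IsSymmetric := by
      intro x y
      simp only [LinearMap.smul_apply, real_inner_smul_left, real_inner_smul_right]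
      rw [hSt₁sym x y]
    have hApsd : ∀ x, 0 ≤ ⟪x, ((1-ε₁) • St₁) x⟫ := by
      intro x
      simp only [LinearMap.smul_apply, real_inner_smul_right]
      exact mul_nonneg hε₁'.le (hSt₁psd x)
    have hAinv : ∀ x, ((1-ε₁) • St₁) (((1-ε₁)⁻¹ • St₁inv) x) = x := by
      intro x
      rw [LinearMap.smul_apply, LinearMap.smul_apply, map_smul, smul_smul,
        mul_inv_cancel₀ (ne_of_gt hε₁'), one_smul, pSt₁']
    have ord2' := inv_le_inv_loewner ((1-ε₁) • St₁) ((1-ε₁)⁻¹ • St₁inv) S₁ S₁i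
      hAsym hApsd hAinv pS₁' h₁
    intro x
    have h3 := ord2' x
    simp only [LinearMap.smul_apply, real_inner_smul_right] at h3
    have hc' : (1-ε₁) * (1-ε₁)⁻¹ = 1 := mul_inv_cancel₀ (ne_of_gt hε₁')
    have h4 := mul_le_mul_of_nonneg_left h3 hε₁'.le
    rwa [← mul_assoc, hc', one_mul] at h4
  -- basic objects
  have hPt₁u : Pt₁ u = u - M₁inv (Bt (St₁inv (B u))) := by rw [hPt₁]; rfl
  have hBPt₁ : B (Pt₁ u) = B u - S₁ (St₁inv (B u)) := by
    rw [hPt₁u, map_sub, ← hS₁app]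
  set y : W := St₁inv (B u) with hydef
  set q : W := B u - S₁ y with hqdef
  have hSt₁y : St₁ y = B u := pSt₁' _
  have hPt₂x : ∀ x, Pt₂ x = x - M₂inv (Bt (St₂inv (B x))) := fun x => by rw [hPt₂]; rfl
  have hv : Pt₁ u - Pt₂ (Pt₁ u) = M₂inv (Bt (St₂inv q)) := by
    rw [hPt₂x, hBPt₁, sub_sub_cancel]
  set w : W := St₂inv q with hwdef
  set v : V := M₂inv (Bt w) with hvdef
  have hM₂v : M₂ v = Bt w := pM₂' _
  have hBv : B v = S₂ w := by rw [hvdef, ← hS₂app]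
  have hSt₂w : St₂ w = q := pSt₂' _
  -- the comparison vector z
  set z : V := M₁inv (Bt (S₁i q)) with hzdef
  have hBz : B z = q := by rw [hzdef, ← hS₁app, pS₁']
  have hM₁z : M₁ z = Bt (S₁i q) := pM₁' _
  set t : ℝ := ⟪q, S₁i q⟫ with htdef
  have ht0 : 0 ≤ t := hS₁ipsd q
  have hzM₁ : ⟪z, M₁ z⟫ = t := by
    rw [hM₁z, adjR, hBz]
  have hzM₂ : ⟪z, M₂ z⟫ ≤ c * t := by
    have h3 := hM₂₁ z
    simp only [LinearMap.smul_apply, real_inner_smul_right] at h3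
    rw [← hzM₁]; exact h3
  -- chain of inequalities for the norm
  have hNa : ⟪v, M₂ v⟫ = ⟪w, S₂ w⟫ := by
    rw [hM₂v, adjR, hBv]; exact real_inner_comm _ _
  have hN1 : ⟪v, M₂ v⟫ ≤ ⟪w, q⟫ := by
    rw [hNa, ← hSt₂w]; exact h₂' w
  have hwq : ⟪w, q⟫ = ⟪v, M₂ z⟫ := by
    calc ⟪w, q⟫ = ⟪w, B z⟫ := by rw [hBz]
      _ = ⟪Bt w, z⟫ := (adjL w z).symm
      _ = ⟪M₂ v, z⟫ := by rw [hM₂v]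
      _ = ⟪v, M₂ z⟫ := hM₂sym v z
  have hcs := cs_psd_s5 hM₂sym hM₂psd v z
  have hchain : ⟪v, M₂ v⟫ ≤ Real.sqrt ⟪v, M₂ v⟫ * Real.sqrt (c * t) := by
    have h4 : Real.sqrt ⟪z, M₂ z⟫ ≤ Real.sqrt (c * t) := Real.sqrt_le_sqrt hzM₂
    calc ⟪v, M₂ v⟫ ≤ ⟪w, q⟫ := hN1
      _ = ⟪v, M₂ z⟫ := hwq
      _ ≤ Real.sqrt ⟪v, M₂ v⟫ * Real.sqrt ⟪z, M₂ z⟫ := hcs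
      _ ≤ Real.sqrt ⟪v, M₂ v⟫ * Real.sqrt (c * t) :=
          mul_le_mul_of_nonneg_left h4 (Real.sqrt_nonneg _)
  have ha : Real.sqrt ⟪v, M₂ v⟫ ≤ Real.sqrt c * Real.sqrt t := by
    have hN0 : 0 ≤ ⟪v, M₂ v⟫ := hM₂psd v
    rcases eq_or_lt_of_le hN0 with h0 | hpos
    · rw [← h0, Real.sqrt_zero]; positivity
    · have hs : 0 < Real.sqrt ⟪v, M₂ v⟫ := Real.sqrt_pos.mpr hpos
      have h5 : Real.sqrt ⟪v, M₂ v⟫ * Real.sqrt ⟪v, M₂ v⟫ = ⟪v, M₂ v⟫ :=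
        Real.mul_self_sqrt hN0
      have h6 : Real.sqrt ⟪v, M₂ v⟫ * Real.sqrt ⟪v, M₂ v⟫ ≤
          Real.sqrt ⟪v, M₂ v⟫ * Real.sqrt (c * t) := by rw [h5]; exact hchain
      have h7 := le_of_mul_le_mul_left h6 hs
      rwa [Real.sqrt_mul hc.le] at h7
  -- bound (A): t ≤ ε₁² ⟨u, M₁ u⟩
  have hHmsym : (S₁i - St₁inv).IsSymmetric := by
    intro a b
    simp only [LinearMap.sub_apply, inner_sub_left, inner_sub_right]
    rw [hS₁isym a b, hSt₁invsym a b]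
  have hHmpsd : ∀ x, 0 ≤ ⟪x, (S₁i - St₁inv) x⟫ := by
    intro x
    simp only [LinearMap.sub_apply, inner_sub_right]
    linarith [ord1 x]
  have hHmG : ∀ x, ⟪x, (S₁i - St₁inv) x⟫ ≤ ε₁ * ⟪x, S₁i x⟫ := by
    intro x
    simp only [LinearMap.sub_apply, inner_sub_right]
    linarith [ord2 x]
  have hkeyA := key_lemma S₁i S₁ (S₁i - St₁inv) pS₁ hS₁isym hHmsym hS₁ipsd hHmpsd
    ε₁ hε₁0.le hHmG (B u)
  have hq_eq : q = S₁ ((S₁i - St₁inv) (B u)) := by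
    have e : S₁ ((S₁i - St₁inv) (B u)) = S₁ (S₁i (B u)) - S₁ (St₁inv (B u)) := by
      simp [map_sub]
    rw [e, pS₁']
  have htA : t = ⟪(S₁i - St₁inv) (B u), S₁ ((S₁i - St₁inv) (B u))⟫ := by
    rw [htdef, hq_eq, pS₁]
    exact real_inner_comm _ _
  have hproj : ⟪B u, S₁i (B u)⟫ ≤ ⟪u, M₁ u⟫ := by
    set p : V := M₁inv (Bt (S₁i (B u))) with hpdef
    have hMp : M₁ p = Bt (S₁i (B u)) := pM₁' _
    have hBp : B p = B u := by rw [hpdef, ← hS₁app, pS₁']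
    have e1 : ⟪u, M₁ p⟫ = ⟪B u, S₁i (B u)⟫ := by rw [hMp, adjR]
    have e2 : ⟪p, M₁ u⟫ = ⟪B u, S₁i (B u)⟫ := by
      rw [← hM₁sym p u, hMp, adjL]
      exact real_inner_comm _ _
    have e3 : ⟪p, M₁ p⟫ = ⟪B u, S₁i (B u)⟫ := by
      rw [hMp, adjR, hBp]
    have h0 : 0 ≤ ⟪u - p, M₁ (u - p)⟫ := hM₁psd _
    have e4 : ⟪u - p, M₁ (u - p)⟫ =
        ⟪u, M₁ u⟫ - ⟪u, M₁ p⟫ - ⟪p, M₁ u⟫ + ⟪p, M₁ p⟫ := by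
      simp only [map_sub, inner_sub_left, inner_sub_right]
      ring
    rw [e4, e1, e2, e3] at h0
    linarith
  have tbound1 : t ≤ ε₁^2 * ⟪u, M₁ u⟫ := by
    rw [htA]
    calc ⟪(S₁i - St₁inv) (B u), S₁ ((S₁i - St₁inv) (B u))⟫
        ≤ ε₁^2 * ⟪B u, S₁i (B u)⟫ := hkeyA
      _ ≤ ε₁^2 * ⟪u, M₁ u⟫ := mul_le_mul_of_nonneg_left hproj (sq_nonneg ε₁)
  -- bound (B): t ≤ (ε₁/(1-ε₁))² ⟨u - Pt₁ u, M₁ (u - Pt₁ u)⟩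
  have hH2sym : (St₁ - S₁).IsSymmetric := by
    intro a b
    simp only [LinearMap.sub_apply, inner_sub_left, inner_sub_right]
    rw [hSt₁sym a b, hS₁sym a b]
  have hH2psd : ∀ x, 0 ≤ ⟪x, (St₁ - S₁) x⟫ := by
    intro x
    simp only [LinearMap.sub_apply, inner_sub_right]
    linarith [h₁' x]
  have hH2G : ∀ x, ⟪x, (St₁ - S₁) x⟫ ≤ (ε₁ / (1 - ε₁)) * ⟪x, S₁ x⟫ := by
    intro x
    have h8 := h₁ x
    simp only [LinearMap.smul_apply, real_inner_smul_right] at h8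
    simp only [LinearMap.sub_apply, inner_sub_right]
    rw [div_mul_eq_mul_div, le_div_iff₀ hε₁']
    linarith [h8]
  have hkeyB := key_lemma S₁ S₁i (St₁ - S₁) pS₁' hS₁sym hH2sym hS₁psd hH2psd
    (ε₁ / (1 - ε₁)) (div_nonneg hε₁0.le hε₁'.le) hH2G y
  have hH2y : (St₁ - S₁) y = q := by
    simp only [LinearMap.sub_apply]
    rw [hSt₁y]
  have tbound2 : t ≤ (ε₁ / (1 - ε₁))^2 * ⟪y, S₁ y⟫ := by
    have e : t = ⟪(St₁ - S₁) y, S₁i ((St₁ - S₁) y)⟫ := by rw [hH2y]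
    rw [e]; exact hkeyB
  have hup : u - Pt₁ u = M₁inv (Bt y) := by rw [hPt₁u, sub_sub_cancel]
  have hyS₁ : ⟪y, S₁ y⟫ = ⟪u - Pt₁ u, M₁ (u - Pt₁ u)⟫ := by
    rw [hup, pM₁', adjR, ← hS₁app]
    exact real_inner_comm _ _
  -- finish
  have hvv : (Pt₁ - Pt₂ ∘ₗ Pt₁) u = v := by
    simp only [LinearMap.sub_apply, LinearMap.comp_apply]
    exact hv
  constructor
  · show anorm M₂ ((Pt₁ - Pt₂ ∘ₗ Pt₁) u) ≤ Real.sqrt c * ε₁ * anorm M₁ u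
    rw [hvv]
    simp only [anorm]
    have h9 : Real.sqrt t ≤ ε₁ * Real.sqrt ⟪u, M₁ u⟫ := by
      have h' := Real.sqrt_le_sqrt tbound1
      rwa [Real.sqrt_mul (sq_nonneg ε₁), Real.sqrt_sq hε₁0.le] at h'
    calc Real.sqrt ⟪v, M₂ v⟫ ≤ Real.sqrt c * Real.sqrt t := ha
      _ ≤ Real.sqrt c * (ε₁ * Real.sqrt ⟪u, M₁ u⟫) :=
          mul_le_mul_of_nonneg_left h9 (Real.sqrt_nonneg c)
      _ = Real.sqrt c * ε₁ * Real.sqrt ⟪u, M₁ u⟫ := (mul_assoc _ _ _).symm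
  · show anorm M₂ ((Pt₁ - Pt₂ ∘ₗ Pt₁) u) ≤
      Real.sqrt c * (ε₁ / (1 - ε₁)) * anorm M₁ (u - Pt₁ u)
    rw [hvv]
    simp only [anorm]
    have h9 : Real.sqrt t ≤ (ε₁ / (1 - ε₁)) * Real.sqrt ⟪u - Pt₁ u, M₁ (u - Pt₁ u)⟫ := by
      rw [← hyS₁]
      have h' := Real.sqrt_le_sqrt tbound2
      rwa [Real.sqrt_mul (sq_nonneg _), Real.sqrt_sq (div_nonneg hε₁0.le hε₁'.le)] at h'
    calc Real.sqrt ⟪v, M₂ v⟫ ≤ Real.sqrt c * Real.sqrt t := ha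
      _ ≤ Real.sqrt c * ((ε₁ / (1 - ε₁)) * Real.sqrt ⟪u - Pt₁ u, M₁ (u - Pt₁ u)⟫) :=
          mul_le_mul_of_nonneg_left h9 (Real.sqrt_nonneg c)
      _ = Real.sqrt c * (ε₁ / (1 - ε₁)) * Real.sqrt ⟪u - Pt₁ u, M₁ (u - Pt₁ u)⟫ :=
          (mul_assoc _ _ _).symm
end
end

section
/- Let f : V → ℝ be differentiable with gradient ∇f, let α⋆ > 0, and suppose u⋆φ ∈ V satisfies the fixed-point equation u⋆φ = P̃(u⋆φ − α⋆ M⁻¹ ∇f(u⋆φ)). Then P_M M⁻¹ ∇f(u⋆φ) = 0, i.e., the first-order optimality condition relative to the metric M holds at u⋆φ. -/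
open scoped RealInnerProductSpace

noncomputable section

theorem stmt6 {V W : Type*}
    [NormedAddCommGroup V] [InnerProductSpace ℝ V] [FiniteDimensional ℝ V]
    [NormedAddCommGroup W] [InnerProductSpace ℝ W] [FiniteDimensional ℝ W]
    (M Minv : V →ₗ[ℝ] V) (hMsym : M.IsSymmetric)
    (hMpos : ∀ u : V, u ≠ 0 → 0 < ⟪u, M u⟫)
    (hMinv : Minv ∘ₗ M = LinearMap.id) (hMinv' : M ∘ₗ Minv = LinearMap.id)
    (B : V →ₗ[ℝ] W) (hB : Function.Surjective B)
    (S Sinv : W →ₗ[ℝ] W) (hS : S = B ∘ₗ Minv ∘ₗ LinearMap.adjoint B)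
    (hSinv : Sinv ∘ₗ S = LinearMap.id) (hSinv' : S ∘ₗ Sinv = LinearMap.id)
    (St Stinv : W →ₗ[ℝ] W) (hStsym : St.IsSymmetric)
    (hStpos : ∀ w : W, w ≠ 0 → 0 < ⟪w, St w⟫)
    (hStinv : Stinv ∘ₗ St = LinearMap.id) (hStinv' : St ∘ₗ Stinv = LinearMap.id)
    (PM Pt : V →ₗ[ℝ] V)
    (hPM : PM = LinearMap.id - Minv ∘ₗ LinearMap.adjoint B ∘ₗ Sinv ∘ₗ B)
    (hPt : Pt = LinearMap.id - Minv ∘ₗ LinearMap.adjoint B ∘ₗ Stinv ∘ₗ B)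
    (f : V → ℝ) (gradf : V → V) (hf : ∀ x : V, HasGradientAt f (gradf x) x)
    (αstar : ℝ) (hα : 0 < αstar)
    (uphi : V) (hfix : uphi = Pt (uphi - αstar • Minv (gradf uphi))) :
    PM (Minv (gradf uphi)) = 0 := by
  set g := gradf uphi with hg
  set w : W := Stinv (B (uphi - αstar • Minv g)) with hw
  have key : αstar • Minv g = - Minv ((LinearMap.adjoint B) w) := by
    have h := hfix
    rw [hPt] at h
    simp only [LinearMap.sub_apply, LinearMap.id_apply, LinearMap.comp_apply, ← hw] at h
    have h2 : uphi - (uphi - αstar • Minv g - Minv ((LinearMap.adjoint B) w)) = 0 := by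
      rw [← h]; abel
    have h3 : αstar • Minv g + Minv ((LinearMap.adjoint B) w) = 0 := by
      rw [← h2]; abel
    exact eq_neg_of_add_eq_zero_left h3
  have hzero : PM (Minv ((LinearMap.adjoint B) w)) = 0 := by
    rw [hPM]
    simp only [LinearMap.sub_apply, LinearMap.id_apply, LinearMap.comp_apply]
    have hBw : B (Minv ((LinearMap.adjoint B) w)) = S w := by
      rw [hS]; rfl
    rw [hBw]
    have : Sinv (S w) = w := by
      have := congrArg (fun L => L w) hSinv
      simpa using this
    rw [this, sub_self]
  have hMg : Minv g = (-αstar⁻¹) • Minv ((LinearMap.adjoint B) w) := by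
    have := congrArg (fun v => αstar⁻¹ • v) key
    simp only [smul_smul, inv_mul_cancel₀ (ne_of_gt hα), one_smul, smul_neg] at this
    rw [this, neg_smul]
  rw [hMg, map_smul, hzero, smul_zero]
end
end

section
/- For all u, v in the kernel of B, the Bregman divergence satisfies D_f(u, v) ≤ (1/(2μ))·‖P̃ M⁻¹(∇f(u) − ∇f(v))‖²_M. -/
open scoped RealInnerProductSpace

noncomputable section

theorem stmt7 {V W : Type*}
    [NormedAddCommGroup V] [InnerProductSpace ℝ V] [FiniteDimensional ℝ V]
    [NormedAddCommGroup W] [InnerProductSpace ℝ W] [FiniteDimensional ℝ W]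
    (M Minv : V →ₗ[ℝ] V) (hMsym : M.IsSymmetric)
    (hMpos : ∀ u : V, u ≠ 0 → 0 < ⟪u, M u⟫)
    (hMinv : Minv ∘ₗ M = LinearMap.id) (hMinv' : M ∘ₗ Minv = LinearMap.id)
    (B : V →ₗ[ℝ] W) (hB : Function.Surjective B)
    (S : W →ₗ[ℝ] W) (hS : S = B ∘ₗ Minv ∘ₗ LinearMap.adjoint B)
    (St Stinv : W →ₗ[ℝ] W) (hStsym : St.IsSymmetric)
    (hStpos : ∀ w : W, w ≠ 0 → 0 < ⟪w, St w⟫)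
    (hStinv : Stinv ∘ₗ St = LinearMap.id) (hStinv' : St ∘ₗ Stinv = LinearMap.id)
    (Pt : V →ₗ[ℝ] V)
    (hPt : Pt = LinearMap.id - Minv ∘ₗ LinearMap.adjoint B ∘ₗ Stinv ∘ₗ B)
    (f : V → ℝ) (gradf : V → V) (hf : ∀ x : V, HasGradientAt f (gradf x) x)
    (μ L : ℝ) (hμ : 0 < μ) (hμL : μ ≤ L)
    (hlow : ∀ u v : V, μ / 2 * ⟪u - v, M (u - v)⟫ ≤ f u - f v - ⟪gradf v, u - v⟫)
    (hupp : ∀ u v : V, f u - f v - ⟪gradf v, u - v⟫ ≤ L / 2 * ⟪u - v, M (u - v)⟫)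
    (u v : V) (hu : B u = 0) (hv : B v = 0) :
    f u - f v - ⟪gradf v, u - v⟫ ≤
      1 / (2 * μ) *
        ⟪Pt (Minv (gradf u - gradf v)), M (Pt (Minv (gradf u - gradf v)))⟫ := by
  set d := u - v with hd
  set g := gradf u - gradf v with hg
  set q := Pt (Minv g) with hq
  have hBd : B d = 0 := by simp [hd, map_sub, hu, hv]
  have h1 : ∀ x, M (Minv x) = x := fun x => LinearMap.congr_fun hMinv' x
  have hMq : M q = g - (LinearMap.adjoint B) (Stinv (B (Minv g))) := by
    simp [hq, hPt, map_sub, h1]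
  have hkey : ⟪q, M d⟫ = ⟪g, d⟫ := by
    rw [← hMsym q d, hMq, inner_sub_left, LinearMap.adjoint_inner_left, hBd,
      inner_zero_right, sub_zero]
  have hsymdq : ⟪d, M q⟫ = ⟪q, M d⟫ := by
    rw [← hMsym d q, real_inner_comm]
  have hnn : 0 ≤ ⟪q - μ • d, M (q - μ • d)⟫ := by
    rcases eq_or_ne (q - μ • d) 0 with h | h
    · simp [h]
    · exact le_of_lt (hMpos _ h)
  have hexp : ⟪q - μ • d, M (q - μ • d)⟫
      = ⟪q, M q⟫ - 2 * μ * ⟪q, M d⟫ + μ ^ 2 * ⟪d, M d⟫ := by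
    simp only [map_sub, map_smul, inner_sub_left, inner_sub_right,
      real_inner_smul_left, real_inner_smul_right, hsymdq]
    ring
  have hD : f u - f v - ⟪gradf v, u - v⟫ ≤ ⟪g, d⟫ - μ / 2 * ⟪d, M d⟫ := by
    have := hlow v u
    have hvu : v - u = -d := by rw [hd]; abel
    rw [hvu] at this
    simp only [map_neg, inner_neg_neg, inner_neg_right, inner_neg_left, neg_neg] at this
    have hgd : ⟪g, d⟫ = ⟪gradf u, d⟫ - ⟪gradf v, d⟫ := by
      rw [hg, inner_sub_left]
    rw [← hd, hgd]
    linarith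
  have hquad : ⟪g, d⟫ - μ / 2 * ⟪d, M d⟫ ≤ 1 / (2 * μ) * ⟪q, M q⟫ := by
    rw [← hkey]
    rw [hexp] at hnn
    have h2 : (0:ℝ) < 2 * μ := by linarith
    rw [one_div, inv_mul_eq_div, le_div_iff₀ h2]
    nlinarith [hnn]
  linarith
end
end

section
/- If S ≼ S̃, then for all u, v ∈ V the Bregman divergence satisfies D_f(u, v) ≥ (1/(2L))·‖P̃ M⁻¹(∇f(u) − ∇f(v))‖²_M. -/
open scoped RealInnerProductSpace

noncomputable section

theorem stmt8 {V W : Type*}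
    [NormedAddCommGroup V] [InnerProductSpace ℝ V] [FiniteDimensional ℝ V]
    [NormedAddCommGroup W] [InnerProductSpace ℝ W] [FiniteDimensional ℝ W]
    (M Minv : V →ₗ[ℝ] V) (hMsym : M.IsSymmetric)
    (hMpos : ∀ u : V, u ≠ 0 → 0 < ⟪u, M u⟫)
    (hMinv : Minv ∘ₗ M = LinearMap.id) (hMinv' : M ∘ₗ Minv = LinearMap.id)
    (B : V →ₗ[ℝ] W) (hB : Function.Surjective B)
    (S : W →ₗ[ℝ] W) (hS : S = B ∘ₗ Minv ∘ₗ LinearMap.adjoint B)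
    (St Stinv : W →ₗ[ℝ] W) (hStsym : St.IsSymmetric)
    (hStpos : ∀ w : W, w ≠ 0 → 0 < ⟪w, St w⟫)
    (hStinv : Stinv ∘ₗ St = LinearMap.id) (hStinv' : St ∘ₗ Stinv = LinearMap.id)
    (Pt : V →ₗ[ℝ] V)
    (hPt : Pt = LinearMap.id - Minv ∘ₗ LinearMap.adjoint B ∘ₗ Stinv ∘ₗ B)
    (f : V → ℝ) (gradf : V → V) (hf : ∀ x : V, HasGradientAt f (gradf x) x)
    (μ L : ℝ) (hμ : 0 < μ) (hμL : μ ≤ L)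
    (hlow : ∀ u v : V, μ / 2 * ⟪u - v, M (u - v)⟫ ≤ f u - f v - ⟪gradf v, u - v⟫)
    (hupp : ∀ u v : V, f u - f v - ⟪gradf v, u - v⟫ ≤ L / 2 * ⟪u - v, M (u - v)⟫)
    (hSSt : LoewnerLE S St)
    (u v : V) :
    1 / (2 * L) *
        ⟪Pt (Minv (gradf u - gradf v)), M (Pt (Minv (gradf u - gradf v)))⟫ ≤
      f u - f v - ⟪gradf v, u - v⟫ := by
  have hL : (0:ℝ) < L := lt_of_lt_of_le hμ hμL
  -- basic helpers
  have hMapp : ∀ z : V, M (Minv z) = z := fun z =>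
    congrFun (congrArg DFunLike.coe hMinv') z
  have hStapp : ∀ z : W, St (Stinv z) = z := fun z =>
    congrFun (congrArg DFunLike.coe hStinv') z
  have hMsemi : ∀ z : V, 0 ≤ ⟪z, M z⟫ := by
    intro z
    by_cases hz : z = 0
    · simp [hz]
    · exact le_of_lt (hMpos z hz)
  have hStsemi : ∀ z : W, 0 ≤ ⟪z, St z⟫ := by
    intro z
    by_cases hz : z = 0
    · simp [hz]
    · exact le_of_lt (hStpos z hz)
  have hMinvsym : ∀ a b : V, ⟪Minv a, b⟫ = ⟪a, Minv b⟫ := by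
    intro a b
    have h := hMsym (Minv a) (Minv b)
    rw [hMapp, hMapp] at h
    exact h.symm
  obtain ⟨g, hg⟩ : ∃ g : V, gradf u - gradf v = g := ⟨_, rfl⟩
  rw [hg]
  obtain ⟨x, hx⟩ : ∃ x : V, Minv g = x := ⟨_, rfl⟩
  rw [hx]
  have hMx : M x = g := by rw [← hx, hMapp]
  have hxg : ⟪x, g⟫ = ⟪g, Minv g⟫ := by rw [real_inner_comm, hx]
  -- Step A: co-coercivity  (1/(2L)) ⟪x, g⟫ ≤ D_f(u,v)
  have stepA : 1 / (2 * L) * ⟪x, g⟫ ≤ f u - f v - ⟪gradf v, u - v⟫ := by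
    obtain ⟨y, hy⟩ : ∃ y : V, u - (1 / L) • x = y := ⟨_, rfl⟩
    have h1 : f y - f u - ⟪gradf u, y - u⟫ ≤ L / 2 * ⟪y - u, M (y - u)⟫ := hupp y u
    have h2 : 0 ≤ f y - f v - ⟪gradf v, y - v⟫ := by
      have := hlow y v
      have h0 : 0 ≤ μ / 2 * ⟪y - v, M (y - v)⟫ :=
        mul_nonneg (by positivity) (hMsemi _)
      linarith
    have hyu : y - u = -((1 / L) • x) := by rw [← hy]; abel
    have hinner1 : ⟪gradf u, y - u⟫ = -(1 / L) * ⟪gradf u, x⟫ := by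
      rw [hyu, inner_neg_right, real_inner_smul_right]; ring
    have hinner2 : ⟪y - u, M (y - u)⟫ = (1 / L) ^ 2 * ⟪x, g⟫ := by
      rw [hyu, map_neg, inner_neg_neg, map_smul, real_inner_smul_left,
        real_inner_smul_right, hMx]
      ring
    have hinner3 : ⟪gradf v, y - v⟫ = ⟪gradf v, u - v⟫ - (1 / L) * ⟪gradf v, x⟫ := by
      have h' : y - v = (u - v) - (1 / L) • x := by rw [← hy]; abel
      rw [h', inner_sub_right, real_inner_smul_right]
    have hgx : ⟪x, g⟫ = ⟪gradf u, x⟫ - ⟪gradf v, x⟫ := by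
      rw [real_inner_comm, ← hg, inner_sub_left]
    rw [hinner1, hinner2] at h1
    rw [hinner3] at h2
    have hL2 : L / 2 * ((1 / L) ^ 2 * ⟪x, g⟫) = 1 / (2 * L) * ⟪x, g⟫ := by
      field_simp
    rw [hL2] at h1
    have key : 1 / L * ⟪x, g⟫ = 1 / (2 * L) * ⟪x, g⟫ + 1 / (2 * L) * ⟪x, g⟫ := by
      field_simp
      ring
    have key2 : 1 / L * ⟪gradf u, x⟫ - 1 / L * ⟪gradf v, x⟫ = 1 / L * ⟪x, g⟫ := by
      rw [← mul_sub, ← hgx]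
    linarith [h1, h2, key, key2]
  -- Step B:  ⟪Pt x, M (Pt x)⟫ ≤ ⟪x, g⟫
  obtain ⟨w, hw⟩ : ∃ w : W, Stinv (B x) = w := ⟨_, rfl⟩
  have hPtx : Pt x = x - Minv ((LinearMap.adjoint B) w) := by
    rw [hPt]
    simp [LinearMap.sub_apply, LinearMap.comp_apply, hw]
  have hMPtx : M (Pt x) = g - (LinearMap.adjoint B) w := by
    rw [hPtx, map_sub, hMx, hMapp]
  have hwBx : ⟪w, B x⟫ = ⟪w, St w⟫ := by rw [← hw, hStapp]
  have hterm1 : ⟪x, (LinearMap.adjoint B) w⟫ = ⟪w, B x⟫ := by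
    rw [LinearMap.adjoint_inner_right, real_inner_comm]
  have hterm2 : ⟪Minv ((LinearMap.adjoint B) w), g⟫ = ⟪w, B x⟫ := by
    rw [hMinvsym, hx]
    exact LinearMap.adjoint_inner_left B x w
  have hterm3 : ⟪Minv ((LinearMap.adjoint B) w), (LinearMap.adjoint B) w⟫ = ⟪w, S w⟫ := by
    rw [real_inner_comm, LinearMap.adjoint_inner_left, hS]
    simp [LinearMap.comp_apply, real_inner_comm]
  have hexp : ⟪Pt x, M (Pt x)⟫ = ⟪x, g⟫ - 2 * ⟪w, B x⟫ + ⟪w, S w⟫ := by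
    rw [hMPtx, hPtx, inner_sub_left, inner_sub_right, inner_sub_right,
      hterm1, hterm2, hterm3]
    ring
  have hSw : ⟪w, S w⟫ ≤ ⟪w, St w⟫ := hSSt w
  have stepB : ⟪Pt x, M (Pt x)⟫ ≤ ⟪x, g⟫ := by
    rw [hexp]
    linarith [hSw, hStsemi w, hwBx]
  -- combine
  have hc : (0:ℝ) ≤ 1 / (2 * L) := by positivity
  calc 1 / (2 * L) * ⟪Pt x, M (Pt x)⟫ ≤ 1 / (2 * L) * ⟪x, g⟫ :=
        mul_le_mul_of_nonneg_left stepB hc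
    _ ≤ f u - f v - ⟪gradf v, u - v⟫ := stepA
end
end

section
/- If S ≼ S̃, then for all u, v ∈ V one has ⟨∇f(u) − ∇f(v), P̃ M⁻¹(∇f(u) − ∇f(v))⟩ ≥ (μ²/2)·‖u − v‖²_M − L²·‖(P̃ − I)(u − v)‖²_M. -/
open scoped RealInnerProductSpace

noncomputable section

/-- Cauchy–Schwarz for a symmetric positive semidefinite bilinear form. -/
lemma psd_cs {V : Type*} [NormedAddCommGroup V] [InnerProductSpace ℝ V]
    (M : V →ₗ[ℝ] V) (hsym : M.IsSymmetric) (hpsd : ∀ x : V, 0 ≤ ⟪x, M x⟫)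
    (x y : V) : ⟪x, M y⟫ ^ 2 ≤ ⟪x, M x⟫ * ⟪y, M y⟫ := by
  have key : ∀ t : ℝ, 0 ≤ ⟪y, M y⟫ * (t * t) + (2 * ⟪x, M y⟫) * t + ⟪x, M x⟫ := by
    intro t
    have h := hpsd (x + t • y)
    have hyx : ⟪y, M x⟫ = ⟪x, M y⟫ := by rw [← hsym]; exact real_inner_comm _ _
    have expand : ⟪x + t • y, M (x + t • y)⟫
        = ⟪y, M y⟫ * (t * t) + (2 * ⟪x, M y⟫) * t + ⟪x, M x⟫ := by
      simp [inner_add_left, inner_add_right, map_add, map_smul,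
        real_inner_smul_left, real_inner_smul_right, hyx]
      ring
    linarith [expand ▸ h]
  have hd := discrim_le_zero (a := ⟪y, M y⟫) (b := 2 * ⟪x, M y⟫) (c := ⟪x, M x⟫) key
  simp only [discrim] at hd
  nlinarith [hd]

set_option maxHeartbeats 1000000 in
theorem stmt9 {V W : Type*}
    [NormedAddCommGroup V] [InnerProductSpace ℝ V] [FiniteDimensional ℝ V]
    [NormedAddCommGroup W] [InnerProductSpace ℝ W] [FiniteDimensional ℝ W]
    (M Minv : V →ₗ[ℝ] V) (hMsym : M.IsSymmetric)
    (hMpos : ∀ u : V, u ≠ 0 → 0 < ⟪u, M u⟫)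
    (hMinv : Minv ∘ₗ M = LinearMap.id) (hMinv' : M ∘ₗ Minv = LinearMap.id)
    (B : V →ₗ[ℝ] W) (hB : Function.Surjective B)
    (S : W →ₗ[ℝ] W) (hS : S = B ∘ₗ Minv ∘ₗ LinearMap.adjoint B)
    (St Stinv : W →ₗ[ℝ] W) (hStsym : St.IsSymmetric)
    (hStpos : ∀ w : W, w ≠ 0 → 0 < ⟪w, St w⟫)
    (hStinv : Stinv ∘ₗ St = LinearMap.id) (hStinv' : St ∘ₗ Stinv = LinearMap.id)
    (Pt : V →ₗ[ℝ] V)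
    (hPt : Pt = LinearMap.id - Minv ∘ₗ LinearMap.adjoint B ∘ₗ Stinv ∘ₗ B)
    (f : V → ℝ) (gradf : V → V) (hf : ∀ x : V, HasGradientAt f (gradf x) x)
    (μ L : ℝ) (hμ : 0 < μ) (hμL : μ ≤ L)
    (hlow : ∀ u v : V, μ / 2 * ⟪u - v, M (u - v)⟫ ≤ f u - f v - ⟪gradf v, u - v⟫)
    (hupp : ∀ u v : V, f u - f v - ⟪gradf v, u - v⟫ ≤ L / 2 * ⟪u - v, M (u - v)⟫)
    (hSSt : LoewnerLE S St)
    (u v : V) :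
    μ ^ 2 / 2 * ⟪u - v, M (u - v)⟫ -
        L ^ 2 * ⟪Pt (u - v) - (u - v), M (Pt (u - v) - (u - v))⟫ ≤
      ⟪gradf u - gradf v, Pt (Minv (gradf u - gradf v))⟫ := by
  have hL : (0:ℝ) < L := lt_of_lt_of_le hμ hμL
  -- basic operator facts
  have hMM : ∀ z : V, M (Minv z) = z := fun z => LinearMap.congr_fun hMinv' z
  have hStSt : ∀ w : W, St (Stinv w) = w := fun w => LinearMap.congr_fun hStinv' w
  have htrick : ∀ z y : V, ⟪Minv z, M y⟫ = ⟪z, y⟫ := by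
    intro z y; rw [← hMsym, hMM]
  have hm0 : ∀ x : V, 0 ≤ ⟪x, M x⟫ := by
    intro x
    by_cases hx : x = 0
    · simp [hx]
    · exact (hMpos x hx).le
  have hStinvSym : ∀ x y : W, ⟪Stinv x, y⟫ = ⟪x, Stinv y⟫ := by
    intro x y
    conv_lhs => rw [← hStSt y]
    rw [← hStsym, hStSt]
  have hPtapp : ∀ x : V, Pt x = x - Minv (LinearMap.adjoint B (Stinv (B x))) := by
    intro x; rw [hPt]; rfl
  have hSapp : ∀ w : W, S w = B (Minv (LinearMap.adjoint B w)) := by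
    intro w; rw [hS]; rfl
  set g : V := gradf u - gradf v with hgdef
  set e : V := u - v with hedef
  set h : V := Minv g with hhdef
  set d : V := Pt e - e with hddef
  -- strong monotonicity: μ ⟪e,Me⟫ ≤ ⟪g,e⟫
  have hmono : μ * ⟪e, M e⟫ ≤ ⟪g, e⟫ := by
    have h1 := hlow u v
    have h2 := hlow v u
    have hvu : v - u = -e := by rw [hedef]; abel
    rw [hvu] at h2
    simp only [map_neg, inner_neg_left, inner_neg_right, neg_neg] at h2
    have hge : ⟪g, e⟫ = ⟪gradf u, e⟫ - ⟪gradf v, e⟫ := inner_sub_left _ _ _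
    rw [← hedef] at h1
    linarith
  -- smoothness: ⟪g,e⟫ ≤ L ⟪e,Me⟫
  have hsmooth : ⟪g, e⟫ ≤ L * ⟪e, M e⟫ := by
    have h1 := hupp u v
    have h2 := hupp v u
    have hvu : v - u = -e := by rw [hedef]; abel
    rw [hvu] at h2
    simp only [map_neg, inner_neg_left, inner_neg_right, neg_neg] at h2
    have hge : ⟪g, e⟫ = ⟪gradf u, e⟫ - ⟪gradf v, e⟫ := inner_sub_left _ _ _
    rw [← hedef] at h1
    linarith
  -- cocoercivity
  have hdescent : ∀ a b : V, f b - ⟪gradf b, b⟫ ≤ f a - ⟪gradf b, a⟫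
      - 1 / (2 * L) * ⟪gradf a - gradf b, Minv (gradf a - gradf b)⟫ := by
    intro a b
    set G : V := gradf a - gradf b with hGdef
    set y : V := a - (1 / L) • Minv G with hydef
    have hA : 0 ≤ f y - f b - ⟪gradf b, y - b⟫ := by
      have := hlow y b
      have := mul_nonneg (by positivity : (0:ℝ) ≤ μ / 2) (hm0 (y - b))
      linarith
    have hBd := hupp y a
    have hya : y - a = -((1 / L) • Minv G) := by rw [hydef]; abel
    have hc2 : ⟪y - a, M (y - a)⟫ = (1 / L) ^ 2 * ⟪G, Minv G⟫ := by
      rw [hya]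
      simp only [map_neg, inner_neg_neg, map_smul, real_inner_smul_left,
        real_inner_smul_right, hMM]
      rw [real_inner_comm (Minv G) G]
      ring
    have hc1 : ⟪gradf a, y - a⟫ = -(1 / L) * ⟪gradf a, Minv G⟫ := by
      rw [hya]
      simp [real_inner_smul_right]
    have hc3 : ⟪gradf b, y - b⟫ = ⟪gradf b, a - b⟫ - (1 / L) * ⟪gradf b, Minv G⟫ := by
      have : y - b = (a - b) - (1 / L) • Minv G := by rw [hydef]; abel
      rw [this, inner_sub_right, real_inner_smul_right]
    have hGsplit : ⟪G, Minv G⟫ = ⟪gradf a, Minv G⟫ - ⟪gradf b, Minv G⟫ :=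
      inner_sub_left _ _ _
    have hab : ⟪gradf b, a - b⟫ = ⟪gradf b, a⟫ - ⟪gradf b, b⟫ := inner_sub_right _ _ _
    rw [hc2, hc1] at hBd
    rw [hc3, hab] at hA
    have hL' : L ≠ 0 := ne_of_gt hL
    have key : (1 / L) * ⟪gradf a, Minv G⟫ - (1 / L) * ⟪gradf b, Minv G⟫
        - L / 2 * ((1 / L) ^ 2 * ⟪G, Minv G⟫) = 1 / (2 * L) * ⟪G, Minv G⟫ := by
      rw [hGsplit]; field_simp; ring
    linarith
  have hcoco : ⟪g, Minv g⟫ ≤ L * ⟪g, e⟫ := by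
    have d1 := hdescent u v
    have d2 := hdescent v u
    have hneg : gradf v - gradf u = -g := by rw [hgdef]; abel
    rw [hneg] at d2
    simp only [map_neg, inner_neg_neg] at d2
    have hexp : ⟪g, e⟫ = ⟪gradf u, u⟫ - ⟪gradf u, v⟫ - ⟪gradf v, u⟫ + ⟪gradf v, v⟫ := by
      rw [hgdef, hedef]
      simp [inner_sub_left, inner_sub_right]
      ring
    have hsum : (1 / L) * ⟪g, Minv g⟫ ≤ ⟪g, e⟫ := by
      rw [hexp]
      have : 1 / (2 * L) * ⟪g, Minv g⟫ + 1 / (2 * L) * ⟪g, Minv g⟫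
          = (1 / L) * ⟪g, Minv g⟫ := by field_simp; ring
      linarith
    calc ⟪g, Minv g⟫ = L * ((1 / L) * ⟪g, Minv g⟫) := by field_simp
    _ ≤ L * ⟪g, e⟫ := by
        exact mul_le_mul_of_nonneg_left hsum hL.le
  have hQ : ⟪g, Minv g⟫ ≤ L ^ 2 * ⟪e, M e⟫ := by
    calc ⟪g, Minv g⟫ ≤ L * ⟪g, e⟫ := hcoco
    _ ≤ L * (L * ⟪e, M e⟫) := mul_le_mul_of_nonneg_left hsmooth hL.le
    _ = L ^ 2 * ⟪e, M e⟫ := by ring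
  -- Mh = g
  have hMh : M h = g := hMM g
  -- lower bound the target by ⟪Pt h, M (Pt h)⟫
  have hsplit : ⟪g, Pt h⟫ = ⟪Pt h, M (Pt h)⟫ + ⟪h - Pt h, M (Pt h)⟫ := by
    rw [← hMh, hMsym, ← inner_add_left]
    congr 1
    abel
  have hresid : 0 ≤ ⟪h - Pt h, M (Pt h)⟫ := by
    have hd1 : h - Pt h = Minv (LinearMap.adjoint B (Stinv (B h))) := by
      rw [hPtapp h]; abel
    rw [hd1, htrick, LinearMap.adjoint_inner_left]
    have hBPt : B (Pt h) = B h - S (Stinv (B h)) := by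
      rw [hPtapp h, map_sub, hSapp]
    rw [hBPt, inner_sub_right]
    have hbh : ⟪Stinv (B h), B h⟫ = ⟪Stinv (B h), St (Stinv (B h))⟫ := by
      rw [hStSt]
    rw [hbh]
    have := hSSt (Stinv (B h))
    linarith [hStsym (Stinv (B h)) (Stinv (B h))]
  -- cross term
  have hhe : ⟪h, M e⟫ = ⟪g, e⟫ := htrick g e
  have hd1 : Pt h - h = -(Minv (LinearMap.adjoint B (Stinv (B h)))) := by
    rw [hPtapp h]; abel
  have hd2 : d = -(Minv (LinearMap.adjoint B (Stinv (B e)))) := by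
    rw [hddef, hPtapp e]; abel
  have hcross : ⟪Pt h - h, M e⟫ = ⟪h, M d⟫ := by
    rw [hd1, hd2, map_neg, inner_neg_left, inner_neg_right, htrick, hMM,
      LinearMap.adjoint_inner_left, hStinvSym, LinearMap.adjoint_inner_right]
  -- abbreviations
  set p : ℝ := ⟪e, M e⟫ with hpdef
  set q : ℝ := ⟪d, M d⟫ with hqdef
  set s : ℝ := ⟪Pt h, M (Pt h)⟫ with hsdef
  have hp0 : 0 ≤ p := hm0 e
  have hq0 : 0 ≤ q := hm0 d
  have hs0 : 0 ≤ s := hm0 (Pt h)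
  set A : ℝ := Real.sqrt p with hAdef
  set D : ℝ := Real.sqrt q with hDdef
  set X : ℝ := Real.sqrt s with hXdef
  have hA2 : A * A = p := Real.mul_self_sqrt hp0
  have hD2 : D * D = q := Real.mul_self_sqrt hq0
  have hX2 : X * X = s := Real.mul_self_sqrt hs0
  have hA0 : 0 ≤ A := Real.sqrt_nonneg _
  have hD0 : 0 ≤ D := Real.sqrt_nonneg _
  have hX0 : 0 ≤ X := Real.sqrt_nonneg _
  -- ⟪h, M h⟫ ≤ (L*A)^2
  have hhh : ⟪h, M h⟫ = ⟪g, Minv g⟫ := htrick g h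
  have hhMh : ⟪h, M h⟫ ≤ (L * A) * (L * A) := by
    rw [hhh]
    calc ⟪g, Minv g⟫ ≤ L ^ 2 * p := hQ
    _ = (L * A) * (L * A) := by rw [← hA2]; ring
  have hh0 : 0 ≤ ⟪h, M h⟫ := hm0 h
  -- CS bounds
  have hcs1 : ⟪h, M d⟫ ^ 2 ≤ ⟪h, M h⟫ * q := psd_cs M hMsym hm0 h d
  have hLAD0 : 0 ≤ (L * A) * D := mul_nonneg (mul_nonneg hL.le hA0) hD0
  have hhd : -((L * A) * D) ≤ ⟪h, M d⟫ := by
    have hsq1 : ⟪h, M d⟫ ^ 2 ≤ ((L * A) * D) ^ 2 := by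
      have h1 : ⟪h, M h⟫ * q ≤ ((L * A) * (L * A)) * q :=
        mul_le_mul_of_nonneg_right hhMh hq0
      have h2 : ((L * A) * (L * A)) * q = ((L * A) * D) ^ 2 := by
        rw [← hD2]; ring
      linarith [hcs1]
    have habs : |⟪h, M d⟫| ≤ (L * A) * D := by
      have := Real.sqrt_le_sqrt hsq1
      rw [Real.sqrt_sq_eq_abs, Real.sqrt_sq hLAD0] at this
      exact this
    linarith [neg_abs_le ⟪h, M d⟫, abs_nonneg ⟪h, M d⟫, habs]
  have hcs2 : ⟪Pt h, M e⟫ ^ 2 ≤ s * p := psd_cs M hMsym hm0 (Pt h) e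
  have hXA0 : 0 ≤ X * A := mul_nonneg hX0 hA0
  have hXA : ⟪Pt h, M e⟫ ≤ X * A := by
    have hsq2 : ⟪Pt h, M e⟫ ^ 2 ≤ (X * A) ^ 2 := by
      have h2 : s * p = (X * A) ^ 2 := by rw [← hX2, ← hA2]; ring
      linarith [hcs2]
    have habs : |⟪Pt h, M e⟫| ≤ X * A := by
      have := Real.sqrt_le_sqrt hsq2
      rw [Real.sqrt_sq_eq_abs, Real.sqrt_sq hXA0] at this
      exact this
    linarith [le_abs_self ⟪Pt h, M e⟫]
  -- assemble: X*A ≥ μ p - L A D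
  have hPtME : ⟪Pt h, M e⟫ = ⟪g, e⟫ + ⟪h, M d⟫ := by
    have : ⟪Pt h, M e⟫ = ⟪h, M e⟫ + ⟪Pt h - h, M e⟫ := by
      rw [← inner_add_left]; congr 1; abel
    rw [this, hhe, hcross]
  have hlower : μ * p - (L * A) * D ≤ X * A := by
    have : μ * p - (L * A) * D ≤ ⟪Pt h, M e⟫ := by
      rw [hPtME]; linarith
    linarith [hXA]
  -- μ A ≤ X + L D
  have hmuA : μ * A ≤ X + L * D := by
    rcases eq_or_lt_of_le hA0 with hA | hA
    · have : A = 0 := hA.symm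
      rw [this, mul_zero]
      have := mul_nonneg hL.le hD0
      linarith
    · have e1 : μ * p - (L * A) * D = (μ * A) * A - ((L * D) * A) := by
        rw [← hA2]; ring
      have e2 : (X + L * D) * A = X * A + (L * D) * A := by ring
      have h1 : (μ * A) * A ≤ (X + L * D) * A := by
        rw [e2]; linarith [hlower, e1]
      exact le_of_mul_le_mul_right h1 hA
  have hsq : (μ * A) * (μ * A) ≤ (X + L * D) * (X + L * D) :=
    mul_self_le_mul_self (by positivity) hmuA
  -- finish
  have hfinal : μ ^ 2 / 2 * p - L ^ 2 * q ≤ ⟪g, Pt h⟫ := by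
    have hG : s ≤ ⟪g, Pt h⟫ := by rw [hsplit]; linarith
    have h5 : 0 ≤ (X - L * D) * (X - L * D) := mul_self_nonneg _
    have e5 : (X + L * D) * (X + L * D)
        = 2 * (X * X) + 2 * ((L * D) * (L * D)) - (X - L * D) * (X - L * D) := by
      ring
    have e4 : L ^ 2 * q = (L * D) * (L * D) := by rw [← hD2]; ring
    have e6 : μ ^ 2 / 2 * p = ((μ * A) * (μ * A)) / 2 := by rw [← hA2]; ring
    linarith [hsq, e5, h5, hG, e4, e6, hX2]
  exact hfinal
end
end

section
/- Assume S ≼ S̃. For α⋆ > 0 define φ : V → V by φ(u) = P̃(u − α⋆ M⁻¹ ∇f(u)). Then for all u, v ∈ V one has ‖φ(u) − φ(v)‖_M ≤ max{|1 − α⋆L|, |1 − α⋆μ|}·‖u − v‖_M. Consequently, for every α⋆ ∈ (0, 2/L) the map φ is a contraction for the M-norm and has a unique fixed point. -/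
/-!
The inexact projection `P̃` is nonexpansive in the `M`-norm: with `w = S̃⁻¹ B x` one finds
`‖P̃ x‖²_M = ‖x‖²_M - 2 ⟪w, S̃ w⟫ + ⟪w, S w⟫ ≤ ‖x‖²_M` since `S ≼ S̃`. It therefore suffices to
bound the gradient step `u ↦ u - α M⁻¹ ∇f u`. Subtracting `μ/2 ‖·‖²_M` from `f` leaves a convex
function whose Bregman divergence is at most `(L - μ)/2 ‖·‖²_M`, so its gradient is cocoercive;
for `e = u - v` and `Δ = ∇f u - ∇f v` this reads `‖Δ‖²_{M⁻¹} ≤ (L + μ) ⟪Δ, e⟫ - μ L ‖e‖²_M`, and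
expanding `‖e - α M⁻¹ Δ‖²_M` produces the factor `max {|1 - αL|, |1 - αμ|}²`.
The fixed point then comes from Banach's theorem applied to an iterate of `φ`.
-/

open scoped RealInnerProductSpace

noncomputable section

section AnormGeometry

variable {V : Type*} [NormedAddCommGroup V] [InnerProductSpace ℝ V]

theorem anorm_smul (A : V →ₗ[ℝ] V) (r : ℝ) (x : V) : anorm A (r • x) = |r| * anorm A x := by
  rw [anorm, anorm, map_smul, real_inner_smul_left, real_inner_smul_right, ← mul_assoc,
    Real.sqrt_mul (mul_self_nonneg r), Real.sqrt_mul_self_eq_abs]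

theorem anorm_nonneg (A : V →ₗ[ℝ] V) (x : V) : 0 ≤ anorm A x :=
  Real.sqrt_nonneg _

theorem inner_map_self_nonneg {A : V →ₗ[ℝ] V} (hA : ∀ u : V, u ≠ 0 → 0 < ⟪u, A u⟫) (x : V) :
    0 ≤ ⟪x, A x⟫ := by
  rcases eq_or_ne x 0 with rfl | hx
  · simp
  · exact (hA x hx).le

theorem anorm_le_mul_anorm {A : V →ₗ[ℝ] V} {x y : V} {c : ℝ} (hc : 0 ≤ c)
    (h : ⟪x, A x⟫ ≤ c ^ 2 * ⟪y, A y⟫) : anorm A x ≤ c * anorm A y := by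
  rw [anorm, anorm, ← Real.sqrt_sq hc, ← Real.sqrt_mul (sq_nonneg c)]
  exact Real.sqrt_le_sqrt h

theorem anorm_eq_zero {A : V →ₗ[ℝ] V} (hA : ∀ u : V, u ≠ 0 → 0 < ⟪u, A u⟫) {x : V} :
    anorm A x = 0 ↔ x = 0 := by
  refine ⟨fun hx => ?_, fun hx => by simp [anorm, hx]⟩
  by_contra hx0
  exact (Real.sqrt_pos.mpr (hA x hx0)).ne' hx

variable [FiniteDimensional ℝ V]

theorem exists_anorm_le_mul_norm (A : V →ₗ[ℝ] V) : ∃ C ≥ 0, ∀ x, anorm A x ≤ C * ‖x‖ := by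
  refine ⟨Real.sqrt ‖A.toContinuousLinearMap‖, Real.sqrt_nonneg _, fun x => ?_⟩
  have h : ⟪x, A x⟫ ≤ ‖A.toContinuousLinearMap‖ * ‖x‖ ^ 2 :=
    calc ⟪x, A x⟫ ≤ ‖x‖ * ‖A.toContinuousLinearMap x‖ := real_inner_le_norm _ _
      _ ≤ ‖x‖ * (‖A.toContinuousLinearMap‖ * ‖x‖) := by
          gcongr
          exact A.toContinuousLinearMap.le_opNorm x
      _ = _ := by ring
  rw [anorm, ← Real.sqrt_sq (norm_nonneg x), ← Real.sqrt_mul (norm_nonneg _)]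
  exact Real.sqrt_le_sqrt h

theorem exists_pos_mul_norm_le_anorm {A : V →ₗ[ℝ] V} (hA : ∀ u : V, u ≠ 0 → 0 < ⟪u, A u⟫) :
    ∃ m > 0, ∀ x, m * ‖x‖ ≤ anorm A x := by
  rcases subsingleton_or_nontrivial V with hV | hV
  · exact ⟨1, one_pos, fun x => by simp [Subsingleton.elim x 0, anorm]⟩
  have hcont : Continuous (anorm A) :=
    (continuous_id.inner A.continuous_of_finiteDimensional).sqrt
  obtain ⟨x₀, hx₀, hmin⟩ := (isCompact_sphere (0 : V) 1).exists_isMinOn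
    (NormedSpace.sphere_nonempty.mpr zero_le_one) hcont.continuousOn
  refine ⟨anorm A x₀, Real.sqrt_pos.mpr (hA x₀ (ne_zero_of_mem_sphere one_ne_zero ⟨x₀, hx₀⟩)),
    fun x => ?_⟩
  rcases eq_or_ne x 0 with rfl | hx
  · simp [anorm]
  have hnorm : 0 < ‖x‖ := norm_pos_iff.mpr hx
  have h : anorm A x₀ ≤ anorm A (‖x‖⁻¹ • x) := hmin (by simp [norm_smul, hx])
  rw [anorm_smul, abs_inv, abs_norm] at h
  calc anorm A x₀ * ‖x‖ ≤ ‖x‖⁻¹ * anorm A x * ‖x‖ := by gcongr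
    _ = anorm A x := by field_simp

theorem exists_unique_fixedPoint_of_anorm_contracting {A : V →ₗ[ℝ] V}
    (hA : ∀ u : V, u ≠ 0 → 0 < ⟪u, A u⟫) {φ : V → V} {c : ℝ} (hc0 : 0 ≤ c) (hc1 : c < 1)
    (hφ : ∀ x y, anorm A (φ x - φ y) ≤ c * anorm A (x - y)) : ∃! z, φ z = z := by
  obtain ⟨m, hm, hmA⟩ := exists_pos_mul_norm_le_anorm hA
  obtain ⟨C, hC, hAC⟩ := exists_anorm_le_mul_norm A
  have hiter : ∀ n x y, anorm A (φ^[n] x - φ^[n] y) ≤ c ^ n * anorm A (x - y) := by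
    intro n
    induction n with
    | zero => simp
    | succ n ih =>
      intro x y
      rw [Function.iterate_succ_apply', Function.iterate_succ_apply', pow_succ', mul_assoc]
      exact (hφ _ _).trans (mul_le_mul_of_nonneg_left (ih x y) hc0)
  -- Contraction for the `A`-norm only makes a high enough iterate contracting for `‖·‖`.
  obtain ⟨n, hn⟩ := exists_pow_lt_of_lt_one (div_pos hm (by linarith : (0 : ℝ) < C + 1)) hc1
  have hK : c ^ n * C / m < 1 := by
    rw [div_lt_one hm]
    rw [lt_div_iff₀ (by linarith)] at hn
    nlinarith [pow_nonneg hc0 n]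
  have hcontr : ContractingWith (c ^ n * C / m).toNNReal φ^[n] := by
    refine ⟨Real.toNNReal_lt_one.mpr hK, LipschitzWith.of_dist_le' fun x y => ?_⟩
    rw [dist_eq_norm, dist_eq_norm]
    calc ‖φ^[n] x - φ^[n] y‖ ≤ anorm A (φ^[n] x - φ^[n] y) / m := (le_div_iff₀' hm).2 (hmA _)
      _ ≤ c ^ n * anorm A (x - y) / m := by gcongr; exact hiter n x y
      _ ≤ c ^ n * (C * ‖x - y‖) / m := by gcongr; exact hAC _
      _ = c ^ n * C / m * ‖x - y‖ := by ring
  set z := hcontr.fixedPoint φ^[n]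
  have hz : φ z = z := hcontr.isFixedPt_fixedPoint_iterate
  refine ⟨z, hz, fun y hy => ?_⟩
  have h := hφ y z
  rw [hy, hz] at h
  have h0 : anorm A (y - z) = 0 :=
    le_antisymm (by nlinarith [anorm_nonneg A (y - z)]) (anorm_nonneg _ _)
  exact sub_eq_zero.mp ((anorm_eq_zero hA).mp h0)

end AnormGeometry

section Bregman

variable {V : Type*} [NormedAddCommGroup V] [InnerProductSpace ℝ V]

def bregman (F : V → ℝ) (g : V → V) (u v : V) : ℝ :=
  F u - F v - ⟪g v, u - v⟫

theorem bregman_add_bregman_swap (F : V → ℝ) (g : V → V) (u v : V) :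
    bregman F g u v + bregman F g v u = ⟪g u - g v, u - v⟫ := by
  simp only [bregman, inner_sub_left, inner_sub_right]
  ring

theorem bregman_sub_bregman (F : V → ℝ) (g : V → V) (u v z : V) :
    bregman F g z u - bregman F g z v = bregman F g v u + ⟪g v - g u, z - v⟫ := by
  simp only [bregman, inner_sub_left, inner_sub_right]
  ring

variable {M Minv : V →ₗ[ℝ] V}

theorem bregman_sub_quadratic (hM : M.IsSymmetric) (F : V → ℝ) (g : V → V) (μ : ℝ) (u v : V) :
    bregman (fun x => F x - μ / 2 * ⟪x, M x⟫) (fun x => g x - μ • M x) u v =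
      bregman F g u v - μ / 2 * ⟪u - v, M (u - v)⟫ := by
  have hvu : ⟪v, M u⟫ = ⟪u, M v⟫ := by rw [real_inner_comm, hM]
  simp only [bregman, map_sub, inner_sub_left, inner_sub_right, real_inner_smul_left, hM _ _, hvu]
  ring

theorem inner_inv_le_two_mul_bregman (hMinv : ∀ x, M (Minv x) = x) {F : V → ℝ} {g : V → V}
    {K : ℝ} (hK : 0 < K) (h0 : ∀ u v, 0 ≤ bregman F g u v)
    (h1 : ∀ u v, bregman F g u v ≤ K / 2 * ⟪u - v, M (u - v)⟫) (u v : V) :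
    ⟪g v - g u, Minv (g v - g u)⟫ ≤ 2 * K * bregman F g v u := by
  set Δ := g v - g u
  -- Test the upper bound at the point reached by a `K⁻¹`-step from `v` in the direction `-Δ`.
  set z := v - K⁻¹ • Minv Δ
  have hzv : z - v = -(K⁻¹ • Minv Δ) := by simp [z]
  have hquad : ⟪z - v, M (z - v)⟫ = K⁻¹ ^ 2 * ⟪Δ, Minv Δ⟫ := by
    rw [hzv, map_neg, map_smul, hMinv, inner_neg_neg, real_inner_smul_left,
      real_inner_smul_right, real_inner_comm]
    ring
  have hlin : ⟪Δ, z - v⟫ = -(K⁻¹ * ⟪Δ, Minv Δ⟫) := by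
    rw [hzv, inner_neg_right, real_inner_smul_right]
  have hhalf : K⁻¹ * ⟪Δ, Minv Δ⟫ / 2 ≤ bregman F g v u := by
    have key := bregman_sub_bregman F g u v z
    have hz := h1 z v
    rw [hlin] at key
    rw [hquad, show K / 2 * (K⁻¹ ^ 2 * ⟪Δ, Minv Δ⟫) = K⁻¹ * ⟪Δ, Minv Δ⟫ / 2 by
      field_simp] at hz
    linarith [h0 z u]
  calc ⟪Δ, Minv Δ⟫ = 2 * K * (K⁻¹ * ⟪Δ, Minv Δ⟫ / 2) := by field_simp
    _ ≤ 2 * K * bregman F g v u := by gcongr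

theorem inner_inv_le_mul_inner_of_bregman_le (hMpsd : ∀ x, 0 ≤ ⟪x, M x⟫)
    (hMinv : ∀ x, M (Minv x) = x) {F : V → ℝ} {g : V → V} {K : ℝ} (hK : 0 ≤ K)
    (h0 : ∀ u v, 0 ≤ bregman F g u v)
    (h1 : ∀ u v, bregman F g u v ≤ K / 2 * ⟪u - v, M (u - v)⟫) (u v : V) :
    ⟪g u - g v, Minv (g u - g v)⟫ ≤ K * ⟪g u - g v, u - v⟫ := by
  -- `K = 0` is allowed, so argue with `K + ε > 0` and let `ε → 0`.
  have hε : ∀ ε > 0, ⟪g u - g v, Minv (g u - g v)⟫ ≤ (K + ε) * ⟪g u - g v, u - v⟫ := by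
    intro ε hε
    have h1ε : ∀ u v, bregman F g u v ≤ (K + ε) / 2 * ⟪u - v, M (u - v)⟫ := fun u v =>
      (h1 u v).trans (by gcongr; exacts [hMpsd _, le_add_of_nonneg_right hε.le])
    have huv := inner_inv_le_two_mul_bregman hMinv (by positivity) h0 h1ε v u
    have hvu := inner_inv_le_two_mul_bregman hMinv (by positivity) h0 h1ε u v
    rw [← neg_sub, map_neg, inner_neg_neg] at hvu
    have hsum : (K + ε) * ⟪g u - g v, u - v⟫ =
        (K + ε) * bregman F g u v + (K + ε) * bregman F g v u := by
      rw [← mul_add, bregman_add_bregman_swap]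
    linarith
  have hlim : Filter.Tendsto (fun ε => (K + ε) * ⟪g u - g v, u - v⟫) (nhdsWithin 0 (Set.Ioi 0))
      (nhds (K * ⟪g u - g v, u - v⟫)) := by
    refine tendsto_nhdsWithin_of_tendsto_nhds (Continuous.tendsto' ?_ 0 _ (by simp))
    fun_prop
  exact ge_of_tendsto hlim (eventually_nhdsWithin_of_forall hε)

end Bregman

theorem sub_two_mul_add_sq_mul_le {s a b α μ L : ℝ} (hα : 0 ≤ α) (hs : 0 ≤ s)
    (hμa : μ * s ≤ a) (haL : a ≤ L * s) (hb : b ≤ (L + μ) * a - μ * L * s) :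
    s - 2 * α * a + α ^ 2 * b ≤ max |1 - α * L| |1 - α * μ| ^ 2 * s := by
  have hb' : α ^ 2 * b ≤ α ^ 2 * ((L + μ) * a - μ * L * s) := by gcongr
  rcases le_total (α * (L + μ)) 2 with h | h
  · calc s - 2 * α * a + α ^ 2 * b ≤ (1 - α * μ) ^ 2 * s := by
          nlinarith [mul_nonneg (mul_nonneg (sub_nonneg.2 h) hα) (sub_nonneg.2 hμa)]
      _ ≤ _ := by
          rw [← sq_abs]
          gcongr
          exact le_max_right _ _
  · calc s - 2 * α * a + α ^ 2 * b ≤ (1 - α * L) ^ 2 * s := by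
          nlinarith [mul_nonneg (mul_nonneg (sub_nonneg.2 h) hα) (sub_nonneg.2 haL)]
      _ ≤ _ := by
          rw [← sq_abs]
          gcongr
          exact le_max_left _ _

theorem max_abs_one_sub_mul_lt_one {α μ L : ℝ} (hα : 0 < α) (hμ : 0 < μ) (hμL : μ ≤ L)
    (hαL : α < 2 / L) : max |1 - α * L| |1 - α * μ| < 1 := by
  have hL : 0 < L := hμ.trans_le hμL
  have hαL' : α * L < 2 := (lt_div_iff₀ hL).mp hαL
  have hαμ : α * μ ≤ α * L := by gcongr
  refine max_lt (abs_lt.mpr ⟨?_, ?_⟩) (abs_lt.mpr ⟨?_, ?_⟩) <;> nlinarith [mul_pos hα hμ]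

section GradientStep

variable {V : Type*} [NormedAddCommGroup V] [InnerProductSpace ℝ V] {M Minv : V →ₗ[ℝ] V}

theorem inner_sub_smul_inv_eq (hM : M.IsSymmetric) (hMinv : ∀ x, M (Minv x) = x)
    (α : ℝ) (e Δ : V) :
    ⟪e - α • Minv Δ, M (e - α • Minv Δ)⟫ =
      ⟪e, M e⟫ - 2 * α * ⟪Δ, e⟫ + α ^ 2 * ⟪Δ, Minv Δ⟫ := by
  have h : ⟪Minv Δ, M e⟫ = ⟪Δ, e⟫ := by rw [← hM, hMinv]
  simp only [map_sub, map_smul, hMinv, inner_sub_left, inner_sub_right, real_inner_smul_left,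
    real_inner_smul_right, h, real_inner_comm e Δ, real_inner_comm (Minv Δ) Δ]
  ring

variable {f : V → ℝ} {gradf : V → V} {μ L : ℝ}

theorem inner_sub_bounds_of_bregman_bounds
    (hlow : ∀ u v, μ / 2 * ⟪u - v, M (u - v)⟫ ≤ bregman f gradf u v)
    (hupp : ∀ u v, bregman f gradf u v ≤ L / 2 * ⟪u - v, M (u - v)⟫) (u v : V) :
    μ * ⟪u - v, M (u - v)⟫ ≤ ⟪gradf u - gradf v, u - v⟫ ∧
      ⟪gradf u - gradf v, u - v⟫ ≤ L * ⟪u - v, M (u - v)⟫ := by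
  have hswap : ⟪v - u, M (v - u)⟫ = ⟪u - v, M (u - v)⟫ := by
    rw [← neg_sub, map_neg, inner_neg_neg]
  have hlow' := hlow v u
  have hupp' := hupp v u
  rw [hswap] at hlow' hupp'
  rw [← bregman_add_bregman_swap f]
  constructor <;> linarith [hlow u v, hupp u v]

/-- The cocoercivity of `∇f - μ M` with constant `L - μ`, written out. -/
theorem inner_inv_le_of_bregman_bounds (hM : M.IsSymmetric) (hMpsd : ∀ x, 0 ≤ ⟪x, M x⟫)
    (hMinv : ∀ x, M (Minv x) = x) (hMinvM : ∀ x, Minv (M x) = x) (hμL : μ ≤ L)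
    (hlow : ∀ u v, μ / 2 * ⟪u - v, M (u - v)⟫ ≤ bregman f gradf u v)
    (hupp : ∀ u v, bregman f gradf u v ≤ L / 2 * ⟪u - v, M (u - v)⟫) (u v : V) :
    ⟪gradf u - gradf v, Minv (gradf u - gradf v)⟫ ≤
      (L + μ) * ⟪gradf u - gradf v, u - v⟫ - μ * L * ⟪u - v, M (u - v)⟫ := by
  have key := inner_inv_le_mul_inner_of_bregman_le (F := fun x => f x - μ / 2 * ⟪x, M x⟫)
    (g := fun x => gradf x - μ • M x) hMpsd hMinv (sub_nonneg.2 hμL)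
    (fun u v => by rw [bregman_sub_quadratic hM]; linarith [hlow u v])
    (fun u v => by rw [bregman_sub_quadratic hM]; linarith [hupp u v]) u v
  set e := u - v
  set Δ := gradf u - gradf v
  have hdiff : gradf u - μ • M u - (gradf v - μ • M v) = Δ - μ • M e := by
    simp only [Δ, e, map_sub, smul_sub]
    abel
  have h : ⟪M e, Minv Δ⟫ = ⟪e, Δ⟫ := by rw [hM, hMinv]
  rw [hdiff] at key
  simp only [map_sub, map_smul, hMinvM, inner_sub_left, inner_sub_right,
    real_inner_smul_left, real_inner_smul_right, h, real_inner_comm e Δ,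
    real_inner_comm e (M e)] at key ⊢
  linarith

theorem anorm_gradientStep_sub_le (hM : M.IsSymmetric) (hMpsd : ∀ x, 0 ≤ ⟪x, M x⟫)
    (hMinv : ∀ x, M (Minv x) = x) (hMinvM : ∀ x, Minv (M x) = x) (hμL : μ ≤ L)
    (hlow : ∀ u v, μ / 2 * ⟪u - v, M (u - v)⟫ ≤ bregman f gradf u v)
    (hupp : ∀ u v, bregman f gradf u v ≤ L / 2 * ⟪u - v, M (u - v)⟫) {α : ℝ} (hα : 0 ≤ α)
    (u v : V) :
    anorm M ((u - α • Minv (gradf u)) - (v - α • Minv (gradf v))) ≤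
      max |1 - α * L| |1 - α * μ| * anorm M (u - v) := by
  have hstep : (u - α • Minv (gradf u)) - (v - α • Minv (gradf v)) =
      (u - v) - α • Minv (gradf u - gradf v) := by
    rw [map_sub, smul_sub]
    abel
  obtain ⟨hμa, haL⟩ := inner_sub_bounds_of_bregman_bounds hlow hupp u v
  rw [hstep]
  refine anorm_le_mul_anorm (le_max_of_le_left (abs_nonneg _)) ?_
  rw [inner_sub_smul_inv_eq hM hMinv]
  exact sub_two_mul_add_sq_mul_le hα (hMpsd _) hμa haL
    (inner_inv_le_of_bregman_bounds hM hMpsd hMinv hMinvM hμL hlow hupp u v)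

end GradientStep

theorem anorm_inexactProjection_le {V W : Type*}
    [NormedAddCommGroup V] [InnerProductSpace ℝ V] [FiniteDimensional ℝ V]
    [NormedAddCommGroup W] [InnerProductSpace ℝ W] [FiniteDimensional ℝ W]
    {M Minv : V →ₗ[ℝ] V} (hM : M.IsSymmetric) (hMinv : ∀ x, M (Minv x) = x) {B : V →ₗ[ℝ] W}
    {S St Stinv : W →ₗ[ℝ] W} (hS : S = B ∘ₗ Minv ∘ₗ LinearMap.adjoint B)
    (hStpsd : ∀ w, 0 ≤ ⟪w, St w⟫) (hStinv : ∀ w, St (Stinv w) = w) (hSSt : LoewnerLE S St)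
    {P : V →ₗ[ℝ] V} (hP : P = LinearMap.id - Minv ∘ₗ LinearMap.adjoint B ∘ₗ Stinv ∘ₗ B) (x : V) :
    anorm M (P x) ≤ anorm M x := by
  subst hS hP
  set w := Stinv (B x)
  set q := Minv (LinearMap.adjoint B w)
  have hMq : M q = LinearMap.adjoint B w := hMinv _
  have hxq : ⟪x, M q⟫ = ⟪w, St w⟫ := by
    rw [hMq, real_inner_comm, LinearMap.adjoint_inner_left, hStinv]
  have hqx : ⟪q, M x⟫ = ⟪x, M q⟫ := by rw [← hM, real_inner_comm]
  have hqq : ⟪q, M q⟫ = ⟪w, (B ∘ₗ Minv ∘ₗ LinearMap.adjoint B) w⟫ := by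
    rw [hMq, real_inner_comm, LinearMap.adjoint_inner_left]
    rfl
  have hexp : ⟪x - q, M (x - q)⟫ = ⟪x, M x⟫ - ⟪x, M q⟫ - ⟪q, M x⟫ + ⟪q, M q⟫ := by
    rw [map_sub, inner_sub_left, inner_sub_right, inner_sub_right]
    ring
  refine Real.sqrt_le_sqrt ?_
  change ⟪x - q, M (x - q)⟫ ≤ ⟪x, M x⟫
  linarith [hSSt w, hStpsd w]

theorem stmt10_general {V W : Type*}
    [NormedAddCommGroup V] [InnerProductSpace ℝ V] [FiniteDimensional ℝ V]
    [NormedAddCommGroup W] [InnerProductSpace ℝ W] [FiniteDimensional ℝ W]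
    (M Minv : V →ₗ[ℝ] V) (hMsym : M.IsSymmetric)
    (hMpos : ∀ u : V, u ≠ 0 → 0 < ⟪u, M u⟫)
    (hMinv : Minv ∘ₗ M = LinearMap.id) (hMinv' : M ∘ₗ Minv = LinearMap.id)
    (B : V →ₗ[ℝ] W)
    (S : W →ₗ[ℝ] W) (hS : S = B ∘ₗ Minv ∘ₗ LinearMap.adjoint B)
    (St Stinv : W →ₗ[ℝ] W)
    (hStpos : ∀ w : W, w ≠ 0 → 0 < ⟪w, St w⟫)
    (hStinv' : St ∘ₗ Stinv = LinearMap.id)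
    (Pt : V →ₗ[ℝ] V)
    (hPt : Pt = LinearMap.id - Minv ∘ₗ LinearMap.adjoint B ∘ₗ Stinv ∘ₗ B)
    (f : V → ℝ) (gradf : V → V)
    (μ L : ℝ) (hμ : 0 < μ) (hμL : μ ≤ L)
    (hlow : ∀ u v : V, μ / 2 * ⟪u - v, M (u - v)⟫ ≤ f u - f v - ⟪gradf v, u - v⟫)
    (hupp : ∀ u v : V, f u - f v - ⟪gradf v, u - v⟫ ≤ L / 2 * ⟪u - v, M (u - v)⟫)
    (hSSt : LoewnerLE S St)
    (αstar : ℝ) (hα : 0 < αstar) :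
    (∀ u v : V,
        anorm M (Pt (u - αstar • Minv (gradf u)) - Pt (v - αstar • Minv (gradf v))) ≤
          max |1 - αstar * L| |1 - αstar * μ| * anorm M (u - v)) ∧
      (αstar < 2 / L →
        max |1 - αstar * L| |1 - αstar * μ| < 1 ∧
          ∃! z : V, Pt (z - αstar • Minv (gradf z)) = z) := by
  have hMinvR : ∀ x, M (Minv x) = x := LinearMap.congr_fun hMinv'
  have hMinvL : ∀ x, Minv (M x) = x := LinearMap.congr_fun hMinv
  have hcontr : ∀ u v : V,
      anorm M (Pt (u - αstar • Minv (gradf u)) - Pt (v - αstar • Minv (gradf v))) ≤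
        max |1 - αstar * L| |1 - αstar * μ| * anorm M (u - v) := fun u v => by
    rw [← map_sub]
    exact (anorm_inexactProjection_le hMsym hMinvR hS (inner_map_self_nonneg hStpos)
      (LinearMap.congr_fun hStinv') hSSt hPt _).trans
      (anorm_gradientStep_sub_le hMsym (inner_map_self_nonneg hMpos) hMinvR hMinvL hμL hlow hupp
        hα.le u v)
  refine ⟨hcontr, fun hα2 => ?_⟩
  have hc1 := max_abs_one_sub_mul_lt_one hα hμ hμL hα2
  exact ⟨hc1, exists_unique_fixedPoint_of_anorm_contracting hMpos
    (le_max_of_le_left (abs_nonneg _)) hc1 hcontr⟩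

theorem stmt10 {V W : Type*}
    [NormedAddCommGroup V] [InnerProductSpace ℝ V] [FiniteDimensional ℝ V]
    [NormedAddCommGroup W] [InnerProductSpace ℝ W] [FiniteDimensional ℝ W]
    (M Minv : V →ₗ[ℝ] V) (hMsym : M.IsSymmetric)
    (hMpos : ∀ u : V, u ≠ 0 → 0 < ⟪u, M u⟫)
    (hMinv : Minv ∘ₗ M = LinearMap.id) (hMinv' : M ∘ₗ Minv = LinearMap.id)
    (B : V →ₗ[ℝ] W) (hB : Function.Surjective B)
    (S : W →ₗ[ℝ] W) (hS : S = B ∘ₗ Minv ∘ₗ LinearMap.adjoint B)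
    (St Stinv : W →ₗ[ℝ] W) (hStsym : St.IsSymmetric)
    (hStpos : ∀ w : W, w ≠ 0 → 0 < ⟪w, St w⟫)
    (hStinv : Stinv ∘ₗ St = LinearMap.id) (hStinv' : St ∘ₗ Stinv = LinearMap.id)
    (Pt : V →ₗ[ℝ] V)
    (hPt : Pt = LinearMap.id - Minv ∘ₗ LinearMap.adjoint B ∘ₗ Stinv ∘ₗ B)
    (f : V → ℝ) (gradf : V → V) (hf : ∀ x : V, HasGradientAt f (gradf x) x)
    (μ L : ℝ) (hμ : 0 < μ) (hμL : μ ≤ L)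
    (hlow : ∀ u v : V, μ / 2 * ⟪u - v, M (u - v)⟫ ≤ f u - f v - ⟪gradf v, u - v⟫)
    (hupp : ∀ u v : V, f u - f v - ⟪gradf v, u - v⟫ ≤ L / 2 * ⟪u - v, M (u - v)⟫)
    (hSSt : LoewnerLE S St)
    (αstar : ℝ) (hα : 0 < αstar) :
    (∀ u v : V,
        anorm M (Pt (u - αstar • Minv (gradf u)) - Pt (v - αstar • Minv (gradf v))) ≤
          max |1 - αstar * L| |1 - αstar * μ| * anorm M (u - v)) ∧
      (αstar < 2 / L →
        max |1 - αstar * L| |1 - αstar * μ| < 1 ∧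
          ∃! z : V, Pt (z - αstar • Minv (gradf z)) = z) :=
  stmt10_general M Minv hMsym hMpos hMinv hMinv' B S hS St Stinv hStpos hStinv' Pt hPt f gradf μ L
    hμ hμL hlow hupp hSSt αstar hα
end
end

section
/- Let (M, S̃) and (M⋆, S̃⋆) be two pairs of symmetric positive-definite maps with Schur complements S = B M⁻¹ Bᵀ, S⋆ = B M⋆⁻¹ Bᵀ and inexact projections P̃ = I − M⁻¹BᵀS̃⁻¹B, P̃⋆ = I − M⋆⁻¹BᵀS̃⋆⁻¹B. Suppose there are Θ ∈ [0, θ] and Θ̃ ∈ [0, θ̃] such that M − M⋆ ≼ Θ·M⋆, M⋆ − M ≼ Θ·M, S̃⁻¹ − S̃⋆⁻¹ ≼ Θ̃·S̃⋆⁻¹ and S̃⋆⁻¹ − S̃⁻¹ ≼ Θ̃·S̃⁻¹; set θm = max{θ, θ̃} and Θm = max{Θ, Θ̃}. Suppose also S ≼ S̃ and S⋆ ≼ S̃⋆. Then for every u ∈ V: ‖(P̃ − P̃⋆)u‖²_M ≤ 4·(1 + θm)·Θm² · ⟨u, (I − P̃⋆)u⟩_{M⋆}. -/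
open scoped RealInnerProductSpace

noncomputable section

/-- Polarization bound: if `|⟪u,Du⟫| ≤ Θ⟪u,Au⟫` (one-sided forms), then
`4⟪x,Dv⟫ ≤ 2Θ(⟪x,Ax⟫+⟪v,Av⟫)`. -/
lemma polarBound {E : Type*} [NormedAddCommGroup E] [InnerProductSpace ℝ E]
    (A D : E →ₗ[ℝ] E) (hD : D.IsSymmetric) (Θ : ℝ)
    (h1 : ∀ u : E, ⟪u, D u⟫ ≤ Θ * ⟪u, A u⟫)
    (h2 : ∀ u : E, -(Θ * ⟪u, A u⟫) ≤ ⟪u, D u⟫)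
    (x v : E) : 4 * ⟪x, D v⟫ ≤ 2 * Θ * (⟪x, A x⟫ + ⟪v, A v⟫) := by
  have e1 := h1 (x + v)
  have e2 := h2 (x - v)
  have hsym : ⟪v, D x⟫ = ⟪x, D v⟫ := by
    rw [← hD v x]; exact real_inner_comm _ _
  simp only [map_add, map_sub, inner_add_left, inner_add_right, inner_sub_left,
    inner_sub_right] at e1 e2
  rw [hsym] at e1 e2
  linarith

lemma keyQuad {E : Type*} [NormedAddCommGroup E] [InnerProductSpace ℝ E]
    (A Ainv D : E →ₗ[ℝ] E) (hD : D.IsSymmetric)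
    (hApos : ∀ u : E, 0 ≤ ⟪u, A u⟫)
    (hAinv' : A ∘ₗ Ainv = LinearMap.id)
    (Θ : ℝ) (hΘ : 0 ≤ Θ)
    (h1 : ∀ u : E, ⟪u, D u⟫ ≤ Θ * ⟪u, A u⟫)
    (h2 : ∀ u : E, -(Θ * ⟪u, A u⟫) ≤ ⟪u, D u⟫)
    (v : E) : ⟪D v, Ainv (D v)⟫ ≤ Θ ^ 2 * ⟪v, A v⟫ := by
  set x := Ainv (D v) with hxdef
  have hAx : A x = D v := by
    have := DFunLike.congr_fun hAinv' (D v)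
    simpa using this
  have hxx : ⟪x, A x⟫ = ⟪D v, x⟫ := by rw [hAx, real_inner_comm]
  have hxDv : ⟪x, D v⟫ = ⟪D v, x⟫ := real_inner_comm _ _
  set t0 := ⟪D v, x⟫ with ht0def
  have ht0 : 0 ≤ t0 := by rw [← hxx]; exact hApos x
  have hav : 0 ≤ ⟪v, A v⟫ := hApos v
  set av := ⟪v, A v⟫ with havdef
  show t0 ≤ Θ ^ 2 * av
  rcases ht0.eq_or_lt with h0 | h0
  · rw [← h0]; positivity
  rcases hav.eq_or_lt with ha0 | ha0
  · -- av = 0 : contradiction with t0 > 0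
    exfalso
    set s : ℝ := (Θ + 1)⁻¹ with hsdef
    have hspos : 0 < s := by positivity
    have hc := polarBound A D hD Θ h1 h2 (s • x) (s⁻¹ • v)
    simp only [map_smul, real_inner_smul_left, real_inner_smul_right, smul_eq_mul] at hc
    rw [hxDv] at hc
    have hss : s⁻¹ * (s * t0) = t0 := by field_simp
    rw [hss, hxx, ← havdef, ← ha0] at hc
    -- hc : 4 * t0 ≤ 2 * Θ * (s * (s * t0) + s⁻¹ * (s⁻¹ * 0))
    have hΘs : Θ * s < 1 := by
      rw [hsdef, ← div_eq_mul_inv, div_lt_one (by linarith : (0:ℝ) < Θ + 1)]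
      linarith
    have hs1 : s ≤ 1 := by
      rw [hsdef, ← one_div]
      exact div_le_one_of_le₀ (by linarith) (by linarith)
    nlinarith [mul_pos hspos h0, mul_nonneg hΘ hspos.le, hc, hΘs, hs1]
  · -- av > 0
    set sT := Real.sqrt t0 with hsTdef
    set r := Real.sqrt av with hrdef
    have hsTpos : 0 < sT := Real.sqrt_pos.mpr h0
    have hrpos : 0 < r := Real.sqrt_pos.mpr ha0
    have hsT2 : sT ^ 2 = t0 := Real.sq_sqrt ht0
    have hr2 : r ^ 2 = av := Real.sq_sqrt hav
    set s : ℝ := Real.sqrt (r / sT) with hsdef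
    have hspos : 0 < s := Real.sqrt_pos.mpr (by positivity)
    have hs2 : s * s = r / sT := Real.mul_self_sqrt (by positivity)
    have hc := polarBound A D hD Θ h1 h2 (s • x) (s⁻¹ • v)
    simp only [map_smul, real_inner_smul_left, real_inner_smul_right, smul_eq_mul] at hc
    rw [hxDv] at hc
    have hss : s⁻¹ * (s * t0) = t0 := by field_simp
    rw [hss, hxx, ← havdef] at hc
    have e1 : s * (s * t0) = r * sT := by
      rw [← mul_assoc, hs2, ← hsT2]
      field_simp
    have e2 : s⁻¹ * (s⁻¹ * av) = r * sT := by
      rw [← mul_assoc, ← mul_inv, hs2, ← hr2]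
      field_simp
    rw [e1, e2] at hc
    -- hc : 4 * t0 ≤ 2 * Θ * (r * sT + r * sT)
    nlinarith [mul_pos hsTpos hrpos, sq_nonneg (Θ * r - sT), mul_nonneg hΘ hrpos.le]

set_option maxHeartbeats 1600000

theorem stmt13 {V W : Type*}
    [NormedAddCommGroup V] [InnerProductSpace ℝ V] [FiniteDimensional ℝ V]
    [NormedAddCommGroup W] [InnerProductSpace ℝ W] [FiniteDimensional ℝ W]
    (B : V →ₗ[ℝ] W) (hB : Function.Surjective B)
    (M Minv Mstar Mstarinv : V →ₗ[ℝ] V)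
    (hMsym : M.IsSymmetric) (hMpos : ∀ u : V, u ≠ 0 → 0 < ⟪u, M u⟫)
    (hMinv : Minv ∘ₗ M = LinearMap.id) (hMinv' : M ∘ₗ Minv = LinearMap.id)
    (hMstarsym : Mstar.IsSymmetric) (hMstarpos : ∀ u : V, u ≠ 0 → 0 < ⟪u, Mstar u⟫)
    (hMstarinv : Mstarinv ∘ₗ Mstar = LinearMap.id)
    (hMstarinv' : Mstar ∘ₗ Mstarinv = LinearMap.id)
    (St Stinv Ststar Ststarinv : W →ₗ[ℝ] W)
    (hStsym : St.IsSymmetric) (hStpos : ∀ w : W, w ≠ 0 → 0 < ⟪w, St w⟫)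
    (hStinv : Stinv ∘ₗ St = LinearMap.id) (hStinv' : St ∘ₗ Stinv = LinearMap.id)
    (hStstarsym : Ststar.IsSymmetric) (hStstarpos : ∀ w : W, w ≠ 0 → 0 < ⟪w, Ststar w⟫)
    (hStstarinv : Ststarinv ∘ₗ Ststar = LinearMap.id)
    (hStstarinv' : Ststar ∘ₗ Ststarinv = LinearMap.id)
    (S Sstar : W →ₗ[ℝ] W)
    (hS : S = B ∘ₗ Minv ∘ₗ LinearMap.adjoint B)
    (hSstar : Sstar = B ∘ₗ Mstarinv ∘ₗ LinearMap.adjoint B)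
    (Pt Ptstar : V →ₗ[ℝ] V)
    (hPt : Pt = LinearMap.id - Minv ∘ₗ LinearMap.adjoint B ∘ₗ Stinv ∘ₗ B)
    (hPtstar : Ptstar = LinearMap.id - Mstarinv ∘ₗ LinearMap.adjoint B ∘ₗ Ststarinv ∘ₗ B)
    (Θ Θt θ θt : ℝ)
    (hΘ0 : 0 ≤ Θ) (hΘθ : Θ ≤ θ) (hΘt0 : 0 ≤ Θt) (hΘtθ : Θt ≤ θt)
    (hH1a : LoewnerLE (M - Mstar) (Θ • Mstar))
    (hH1b : LoewnerLE (Mstar - M) (Θ • M))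
    (hH1c : LoewnerLE (Stinv - Ststarinv) (Θt • Ststarinv))
    (hH1d : LoewnerLE (Ststarinv - Stinv) (Θt • Stinv))
    (hSSt : LoewnerLE S St) (hSStstar : LoewnerLE Sstar Ststar)
    (u : V) :
    ⟪(Pt - Ptstar) u, M ((Pt - Ptstar) u)⟫ ≤
      4 * (1 + max θ θt) * max Θ Θt ^ 2 * ⟪u, Mstar (u - Ptstar u)⟫ := by
  -- pointwise versions of the inverse identities
  have hMinvM : ∀ z : V, Minv (M z) = z := fun z => by
    simpa using DFunLike.congr_fun hMinv z
  have hMMinv : ∀ z : V, M (Minv z) = z := fun z => by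
    simpa using DFunLike.congr_fun hMinv' z
  have hMstarMstarinv : ∀ z : V, Mstar (Mstarinv z) = z := fun z => by
    simpa using DFunLike.congr_fun hMstarinv' z
  have hStStinv : ∀ z : W, St (Stinv z) = z := fun z => by
    simpa using DFunLike.congr_fun hStinv' z
  have hStstarStstarinv : ∀ z : W, Ststar (Ststarinv z) = z := fun z => by
    simpa using DFunLike.congr_fun hStstarinv' z
  -- nonneg quadratic forms
  have hMnn : ∀ z : V, 0 ≤ ⟪z, M z⟫ := fun z => by
    rcases eq_or_ne z 0 with h | h
    · simp [h]
    · exact (hMpos z h).le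
  have hMstarnn : ∀ z : V, 0 ≤ ⟪z, Mstar z⟫ := fun z => by
    rcases eq_or_ne z 0 with h | h
    · simp [h]
    · exact (hMstarpos z h).le
  have hStnn : ∀ z : W, 0 ≤ ⟪z, St z⟫ := fun z => by
    rcases eq_or_ne z 0 with h | h
    · simp [h]
    · exact (hStpos z h).le
  have hStinvnn : ∀ z : W, 0 ≤ ⟪z, Stinv z⟫ := fun z => by
    have h := hStnn (Stinv z)
    rwa [hStStinv z, real_inner_comm] at h
  have hStstarinvnn : ∀ z : W, 0 ≤ ⟪z, Ststarinv z⟫ := fun z => by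
    rcases eq_or_ne z 0 with h | h
    · simp [h]
    · have h2 := (hStstarpos (Ststarinv z) (by
        intro hz
        apply h
        rw [← hStstarStstarinv z, hz, map_zero])).le
      rwa [hStstarStstarinv z, real_inner_comm] at h2
  -- symmetry of Stinv, Ststarinv
  have hStinvsym : Stinv.IsSymmetric := by
    intro a b
    calc ⟪Stinv a, b⟫ = ⟪Stinv a, St (Stinv b)⟫ := by rw [hStStinv b]
      _ = ⟪St (Stinv a), Stinv b⟫ := (hStsym _ _).symm
      _ = ⟪a, Stinv b⟫ := by rw [hStStinv a]
  have hStstarinvsym : Ststarinv.IsSymmetric := by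
    intro a b
    calc ⟪Ststarinv a, b⟫ = ⟪Ststarinv a, Ststar (Ststarinv b)⟫ := by
          rw [hStstarStstarinv b]
      _ = ⟪Ststar (Ststarinv a), Ststarinv b⟫ := (hStstarsym _ _).symm
      _ = ⟪a, Ststarinv b⟫ := by rw [hStstarStstarinv a]
  set w : W := B u with hwdef
  set ys : W := Ststarinv w with hysdef
  set R : ℝ := ⟪w, Ststarinv w⟫ with hRdef
  have hRnn : 0 ≤ R := hStstarinvnn w
  set Dm : V →ₗ[ℝ] V := M - Mstar with hDmdef
  set Ds : W →ₗ[ℝ] W := Stinv - Ststarinv with hDsdef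
  set v : V := Mstarinv ((LinearMap.adjoint B) ys) with hvdef
  set a : V := Minv (Dm v) with hadef
  set b : V := Minv ((LinearMap.adjoint B) (Ds w)) with hbdef
  clear_value w ys R Dm Ds v a b
  -- RHS identity
  have hRHS : ⟪u, Mstar (u - Ptstar u)⟫ = R := by
    have h1 : u - Ptstar u = Mstarinv ((LinearMap.adjoint B) (Ststarinv (B u))) := by
      rw [hPtstar]
      simp [LinearMap.sub_apply, LinearMap.comp_apply]
    rw [h1, hMstarMstarinv, LinearMap.adjoint_inner_right, hRdef, hwdef]
  -- decomposition
  have hdecomp : (Pt - Ptstar) u = a - b := by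
    rw [hPt, hPtstar, hadef, hbdef, hDmdef, hDsdef, hvdef, hysdef, hwdef]
    simp only [LinearMap.sub_apply, LinearMap.comp_apply, LinearMap.id_apply, map_sub]
    rw [hMinvM, hMstarMstarinv]
    abel
  -- triangle-type inequality
  have htri : ⟪a - b, M (a - b)⟫ ≤ 2 * ⟪a, M a⟫ + 2 * ⟪b, M b⟫ := by
    have h0 : 0 ≤ ⟪a + b, M (a + b)⟫ := hMnn _
    have hab : ⟪b, M a⟫ = ⟪a, M b⟫ := by
      rw [← hMsym b a]; exact real_inner_comm _ _
    simp only [map_add, map_sub, inner_add_left, inner_add_right, inner_sub_left,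
      inner_sub_right] at h0 ⊢
    rw [hab] at h0 ⊢
    linarith
  -- bound on qM(a)
  have hDmsym : Dm.IsSymmetric := by rw [hDmdef]; exact hMsym.sub hMstarsym
  have hDmq : ∀ z : V, ⟪z, Dm z⟫ = ⟪z, M z⟫ - ⟪z, Mstar z⟫ := fun z => by
    rw [hDmdef]; simp [LinearMap.sub_apply, inner_sub_right]
  have h1m : ∀ z : V, ⟪z, Dm z⟫ ≤ Θ * ⟪z, M z⟫ := by
    intro z
    have hA := hH1a z
    simp only [LinearMap.smul_apply, real_inner_smul_right] at hA
    rw [hDmq z] at hA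
    rw [hDmq z]
    nlinarith [hMnn z, hMstarnn z, mul_nonneg hΘ0 (hMnn z),
      mul_nonneg (mul_nonneg hΘ0 hΘ0) (hMnn z)]
  have h2m : ∀ z : V, -(Θ * ⟪z, M z⟫) ≤ ⟪z, Dm z⟫ := by
    intro z
    have hA := hH1b z
    simp only [LinearMap.sub_apply, LinearMap.smul_apply, inner_sub_right,
      real_inner_smul_right] at hA
    rw [hDmq z]
    linarith
  have hkeyM := keyQuad M Minv Dm hDmsym hMnn hMinv' Θ hΘ0 h1m h2m v
  have hqa : ⟪a, M a⟫ = ⟪Dm v, Minv (Dm v)⟫ := by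
    rw [hadef, hMMinv]
    exact real_inner_comm _ _
  have hMle : ⟪v, M v⟫ ≤ (1 + Θ) * ⟪v, Mstar v⟫ := by
    have hA := hH1a v
    simp only [LinearMap.smul_apply, real_inner_smul_right] at hA
    rw [hDmq v] at hA
    linarith
  have hvMstar : ⟪v, Mstar v⟫ = ⟪ys, Sstar ys⟫ := by
    rw [hvdef, hMstarMstarinv, LinearMap.adjoint_inner_right, hSstar]
    simp only [LinearMap.comp_apply]
    exact real_inner_comm _ _
  have hSstarle : ⟪ys, Sstar ys⟫ ≤ ⟪ys, Ststar ys⟫ := hSStstar ys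
  have hStstareq : ⟪ys, Ststar ys⟫ = R := by
    rw [hysdef, hStstarStstarinv, hRdef]
    exact real_inner_comm _ _
  have hboundA : ⟪a, M a⟫ ≤ Θ ^ 2 * ((1 + Θ) * R) := by
    rw [hqa]
    calc ⟪Dm v, Minv (Dm v)⟫ ≤ Θ ^ 2 * ⟪v, M v⟫ := hkeyM
      _ ≤ Θ ^ 2 * ((1 + Θ) * R) := by
          apply mul_le_mul_of_nonneg_left _ (sq_nonneg Θ)
          calc ⟪v, M v⟫ ≤ (1 + Θ) * ⟪v, Mstar v⟫ := hMle
            _ ≤ (1 + Θ) * R := by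
                apply mul_le_mul_of_nonneg_left _ (by linarith)
                rw [hvMstar]
                calc ⟪ys, Sstar ys⟫ ≤ ⟪ys, Ststar ys⟫ := hSstarle
                  _ = R := hStstareq
  -- bound on qM(b)
  have hDssym : Ds.IsSymmetric := by rw [hDsdef]; exact hStinvsym.sub hStstarinvsym
  have hDsq : ∀ z : W, ⟪z, Ds z⟫ = ⟪z, Stinv z⟫ - ⟪z, Ststarinv z⟫ := fun z => by
    rw [hDsdef]; simp [LinearMap.sub_apply, inner_sub_right]
  have h1s : ∀ z : W, ⟪z, Ds z⟫ ≤ Θt * ⟪z, Stinv z⟫ := by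
    intro z
    have hA := hH1c z
    simp only [LinearMap.smul_apply, real_inner_smul_right] at hA
    rw [hDsq z] at hA
    rw [hDsq z]
    nlinarith [hStinvnn z, hStstarinvnn z, mul_nonneg hΘt0 (hStinvnn z),
      mul_nonneg (mul_nonneg hΘt0 hΘt0) (hStinvnn z)]
  have h2s : ∀ z : W, -(Θt * ⟪z, Stinv z⟫) ≤ ⟪z, Ds z⟫ := by
    intro z
    have hA := hH1d z
    simp only [LinearMap.sub_apply, LinearMap.smul_apply, inner_sub_right,
      real_inner_smul_right] at hA
    rw [hDsq z]
    linarith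
  have hkeyS := keyQuad Stinv St Ds hDssym hStinvnn hStinv Θt hΘt0 h1s h2s w
  have hqb : ⟪b, M b⟫ = ⟪Ds w, S (Ds w)⟫ := by
    rw [hbdef, hMMinv, hS]
    simp only [LinearMap.comp_apply]
    rw [LinearMap.adjoint_inner_right]
    exact real_inner_comm _ _
  have hSle : ⟪Ds w, S (Ds w)⟫ ≤ ⟪Ds w, St (Ds w)⟫ := hSSt _
  have hStinvle : ⟪w, Stinv w⟫ ≤ (1 + Θt) * R := by
    have hA := hH1c w
    simp only [LinearMap.smul_apply, real_inner_smul_right] at hA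
    rw [hDsq w] at hA
    rw [hRdef]
    linarith
  have hboundB : ⟪b, M b⟫ ≤ Θt ^ 2 * ((1 + Θt) * R) := by
    rw [hqb]
    calc ⟪Ds w, S (Ds w)⟫ ≤ ⟪Ds w, St (Ds w)⟫ := hSle
      _ ≤ Θt ^ 2 * ⟪w, Stinv w⟫ := hkeyS
      _ ≤ Θt ^ 2 * ((1 + Θt) * R) := by
          exact mul_le_mul_of_nonneg_left hStinvle (sq_nonneg Θt)
  -- final combination
  rw [hdecomp, hRHS]
  have hfin : 2 * (Θ ^ 2 * ((1 + Θ) * R)) + 2 * (Θt ^ 2 * ((1 + Θt) * R)) ≤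
      4 * (1 + max θ θt) * max Θ Θt ^ 2 * R := by
    have h1 : Θ ^ 2 * ((1 + Θ) * R) ≤ max Θ Θt ^ 2 * ((1 + max θ θt) * R) := by
      apply mul_le_mul (pow_le_pow_left₀ hΘ0 (le_max_left _ _) 2)
      · apply mul_le_mul_of_nonneg_right _ hRnn
        have : Θ ≤ max θ θt := le_trans hΘθ (le_max_left _ _)
        linarith
      · apply mul_nonneg (by linarith) hRnn
      · positivity
    have h2 : Θt ^ 2 * ((1 + Θt) * R) ≤ max Θ Θt ^ 2 * ((1 + max θ θt) * R) := by
      apply mul_le_mul (pow_le_pow_left₀ hΘt0 (le_max_right _ _) 2)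
      · apply mul_le_mul_of_nonneg_right _ hRnn
        have : Θt ≤ max θ θt := le_trans hΘtθ (le_max_right _ _)
        linarith
      · apply mul_nonneg (by linarith) hRnn
      · positivity
    nlinarith [h1, h2]
  calc ⟪a - b, M (a - b)⟫ ≤ 2 * ⟪a, M a⟫ + 2 * ⟪b, M b⟫ := htri
    _ ≤ 2 * (Θ ^ 2 * ((1 + Θ) * R)) + 2 * (Θt ^ 2 * ((1 + Θt) * R)) := by linarith
    _ ≤ 4 * (1 + max θ θt) * max Θ Θt ^ 2 * R := hfin
end
end
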